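/- arXiv:2010.04720 — 7 statements merged into one kernel-verified Lean document; each statement's English description precedes it below -/
import Mathlib

section
/- Let n ≥ 1 and let f : ℝⁿ → ℝ satisfy f(x) ≥ −A₁|x|² − A₂ for all x ∈ ℝⁿ, for some constants A₁, A₂ ≥ 0, and let λ > A₁. Then for every x ∈ ℝⁿ the lower compensated convex transform equals the critical mixed Moreau envelope: C^l_λ(f)(x) = M^λ(M_λ(f))(x), i.e. co[f + λ|·|²](x) − λ|x|² = sup_{y∈ℝⁿ} inf_{u∈ℝⁿ} ( f(u) + λ|u−y|² − λ|y−x|² ). -/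
/-!
Completing the square, `2λ⟪y, u⟫ + c ≤ f u + λ‖u‖²` for all `u` if and only if
`c + λ‖y‖² ≤ f u + λ‖u - y‖²` for all `u`, i.e. `c + λ‖y‖² ≤ M_λ(f)(y)`. Every affine function
on a finite-dimensional inner product space has the form `u ↦ 2λ⟪y, u⟫ + c`, and its value at `x`
minus `λ‖x‖²` is `c + λ‖y‖² - λ‖y - x‖²`. Hence the affine minorants of `f + λ‖·‖²`, evaluated
at `x` and compensated, reach exactly up to the values `M_λ(f)(y) - λ‖y - x‖²`. The growth bound
with `λ > A₁` is what makes `M_λ(f)` finite.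
-/

open scoped BigOperators

/-- Convex envelope: pointwise sup of affine minorants. -/
noncomputable def convEnv {n : ℕ} (g : EuclideanSpace ℝ (Fin n) → ℝ)
    (x : EuclideanSpace ℝ (Fin n)) : ℝ :=
  sSup {a : ℝ | ∃ ℓ : EuclideanSpace ℝ (Fin n) →ᵃ[ℝ] ℝ, (∀ y, ℓ y ≤ g y) ∧ a = ℓ x}

/-- Lower compensated convex transform. -/
noncomputable def lowerT {n : ℕ} (lam : ℝ) (f : EuclideanSpace ℝ (Fin n) → ℝ)
    (x : EuclideanSpace ℝ (Fin n)) : ℝ :=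
  convEnv (fun y => f y + lam * ‖y‖ ^ 2) x - lam * ‖x‖ ^ 2

/-- Lower Moreau envelope. -/
noncomputable def moreauLower {n : ℕ} (lam : ℝ) (f : EuclideanSpace ℝ (Fin n) → ℝ)
    (x : EuclideanSpace ℝ (Fin n)) : ℝ :=
  ⨅ y : EuclideanSpace ℝ (Fin n), (f y + lam * ‖y - x‖ ^ 2)

/-- Upper Moreau envelope. -/
noncomputable def moreauUpper {n : ℕ} (lam : ℝ) (f : EuclideanSpace ℝ (Fin n) → ℝ)
    (x : EuclideanSpace ℝ (Fin n)) : ℝ :=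
  ⨆ y : EuclideanSpace ℝ (Fin n), (f y - lam * ‖y - x‖ ^ 2)

open Set
open scoped InnerProductSpace

section InnerProductSpace

variable {E : Type*} [NormedAddCommGroup E] [InnerProductSpace ℝ E]

lemma bddBelow_range_add_mul_norm_sub_sq {f : E → ℝ} {A₁ A₂ lam : ℝ}
    (hf : ∀ u, -A₁ * ‖u‖ ^ 2 - A₂ ≤ f u) (hlam : A₁ < lam) (y : E) :
    BddBelow (range fun u => f u + lam * ‖u - y‖ ^ 2) := by
  have hgap : 0 < lam - A₁ := sub_pos.2 hlam
  refine ⟨lam * ‖y‖ ^ 2 - A₂ - (|lam| * ‖y‖) ^ 2 / (lam - A₁), ?_⟩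
  rintro _ ⟨u, rfl⟩
  have hinner : lam * ⟪u, y⟫_ℝ ≤ |lam| * (‖u‖ * ‖y‖) := by
    calc lam * ⟪u, y⟫_ℝ ≤ |lam * ⟪u, y⟫_ℝ| := le_abs_self _
      _ = |lam| * |⟪u, y⟫_ℝ| := abs_mul _ _
      _ ≤ |lam| * (‖u‖ * ‖y‖) := by gcongr; exact abs_real_inner_le_norm u y
  have hsquare : 2 * |lam| * ‖y‖ * ‖u‖ - (lam - A₁) * ‖u‖ ^ 2 ≤
      (|lam| * ‖y‖) ^ 2 / (lam - A₁) := by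
    rw [le_div_iff₀ hgap]
    nlinarith [sq_nonneg ((lam - A₁) * ‖u‖ - |lam| * ‖y‖)]
  dsimp only
  rw [norm_sub_sq_real]
  linarith [hf u]

lemma AffineMap.exists_eq_inner_add [FiniteDimensional ℝ E] (ℓ : E →ᵃ[ℝ] ℝ) :
    ∃ v : E, ∀ u, ℓ u = ⟪v, u⟫_ℝ + ℓ 0 := by
  refine ⟨(InnerProductSpace.toDual ℝ E).symm (LinearMap.toContinuousLinearMap ℓ.linear),
    fun u => ?_⟩
  rw [InnerProductSpace.toDual_symm_apply]
  simpa using congrFun ℓ.decomp u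

lemma forall_two_mul_inner_add_le_iff (f : E → ℝ) (lam c : ℝ) (y : E) :
    (∀ u, 2 * lam * ⟪y, u⟫_ℝ + c ≤ f u + lam * ‖u‖ ^ 2) ↔
      ∀ u, c + lam * ‖y‖ ^ 2 ≤ f u + lam * ‖u - y‖ ^ 2 := by
  refine forall_congr' fun u => ?_
  rw [norm_sub_sq_real, real_inner_comm]
  constructor <;> intro h <;> linarith

end InnerProductSpace

section CompensatedConvex

variable {n : ℕ} {f : EuclideanSpace ℝ (Fin n) → ℝ} {lam : ℝ}

lemma le_moreauLower_iff {y : EuclideanSpace ℝ (Fin n)}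
    (hbdd : BddBelow (range fun u => f u + lam * ‖u - y‖ ^ 2)) {b : ℝ} :
    b ≤ moreauLower lam f y ↔ ∀ u, b ≤ f u + lam * ‖u - y‖ ^ 2 :=
  le_ciInf_iff hbdd

lemma exists_le_moreauLower_of_affine_minorant (hlam : lam ≠ 0)
    (hbdd : ∀ y, BddBelow (range fun u => f u + lam * ‖u - y‖ ^ 2))
    {ℓ : EuclideanSpace ℝ (Fin n) →ᵃ[ℝ] ℝ} (hℓ : ∀ u, ℓ u ≤ f u + lam * ‖u‖ ^ 2)
    (x : EuclideanSpace ℝ (Fin n)) :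
    ∃ y, ℓ x ≤ moreauLower lam f y - lam * ‖y - x‖ ^ 2 + lam * ‖x‖ ^ 2 := by
  obtain ⟨v, hv⟩ := ℓ.exists_eq_inner_add
  set y := (2 * lam)⁻¹ • v
  have hℓy : ∀ u, ℓ u = 2 * lam * ⟪y, u⟫_ℝ + ℓ 0 := fun u => by
    rw [hv, real_inner_smul_left]
    field_simp
  have hM : ℓ 0 + lam * ‖y‖ ^ 2 ≤ moreauLower lam f y :=
    (le_moreauLower_iff (hbdd y)).2 <|
      (forall_two_mul_inner_add_le_iff f lam (ℓ 0) y).1 fun u => hℓy u ▸ hℓ u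
  refine ⟨y, ?_⟩
  rw [hℓy, norm_sub_sq_real]
  linarith

lemma exists_affine_minorant_eq {y : EuclideanSpace ℝ (Fin n)}
    (hbdd : BddBelow (range fun u => f u + lam * ‖u - y‖ ^ 2))
    (x : EuclideanSpace ℝ (Fin n)) :
    ∃ ℓ : EuclideanSpace ℝ (Fin n) →ᵃ[ℝ] ℝ, (∀ u, ℓ u ≤ f u + lam * ‖u‖ ^ 2) ∧
      ℓ x = moreauLower lam f y - lam * ‖y - x‖ ^ 2 + lam * ‖x‖ ^ 2 := by
  set c := moreauLower lam f y - lam * ‖y‖ ^ 2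
  let ℓ : EuclideanSpace ℝ (Fin n) →ᵃ[ℝ] ℝ :=
    (innerSL ℝ ((2 * lam) • y)).toLinearMap.toAffineMap + AffineMap.const ℝ _ c
  have hℓ : ∀ u, ℓ u = 2 * lam * ⟪y, u⟫_ℝ + c := fun u => by simp [ℓ]
  refine ⟨ℓ, ?_, ?_⟩
  · simp only [hℓ]
    refine (forall_two_mul_inner_add_le_iff f lam c y).2 ?_
    rw [← le_moreauLower_iff hbdd]
    simp [c]
  · rw [hℓ, norm_sub_sq_real, real_inner_comm]
    ring

lemma lowerT_eq_moreauUpper_moreauLower (hlam : lam ≠ 0)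
    (hbdd : ∀ y, BddBelow (range fun u => f u + lam * ‖u - y‖ ^ 2))
    (x : EuclideanSpace ℝ (Fin n)) :
    lowerT lam f x = moreauUpper lam (moreauLower lam f) x := by
  have hle : ∀ y, moreauLower lam f y - lam * ‖y - x‖ ^ 2 + lam * ‖x‖ ^ 2 ≤
      f x + lam * ‖x‖ ^ 2 := fun y => by
    have hx := (le_moreauLower_iff (hbdd y)).1 le_rfl x
    rw [norm_sub_rev] at hx
    linarith
  have hsup : convEnv (fun u => f u + lam * ‖u‖ ^ 2) x =
      ⨆ y, (moreauLower lam f y - lam * ‖y - x‖ ^ 2 + lam * ‖x‖ ^ 2) := by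
    refine csSup_eq_csSup_of_forall_exists_le ?_ ?_
    · rintro _ ⟨ℓ, hℓ, rfl⟩
      obtain ⟨y, hy⟩ := exists_le_moreauLower_of_affine_minorant hlam hbdd hℓ x
      exact ⟨_, mem_range_self y, hy⟩
    · rintro _ ⟨y, rfl⟩
      obtain ⟨ℓ, hℓ, hx⟩ := exists_affine_minorant_eq (hbdd y) x
      exact ⟨_, ⟨ℓ, hℓ, rfl⟩, hx.ge⟩
  rw [lowerT, hsup, ciSup_sub ⟨_, forall_mem_range.2 hle⟩]
  simp [moreauUpper]

end CompensatedConvex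

theorem lowerT_eq_mixed_moreau_general (n : ℕ)
    (f : EuclideanSpace ℝ (Fin n) → ℝ) (A₁ A₂ : ℝ) (hA₁ : 0 ≤ A₁)
    (hf : ∀ x, f x ≥ -A₁ * ‖x‖ ^ 2 - A₂)
    (lam : ℝ) (hlam : A₁ < lam) (x : EuclideanSpace ℝ (Fin n)) :
    lowerT lam f x = moreauUpper lam (moreauLower lam f) x :=
  lowerT_eq_moreauUpper_moreauLower (hA₁.trans_lt hlam).ne'
    (bddBelow_range_add_mul_norm_sub_sq hf hlam) x

/-- The lower compensated convex transform equals the critical mixed Moreau envelope. -/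
theorem lowerT_eq_mixed_moreau (n : ℕ) (hn : 1 ≤ n)
    (f : EuclideanSpace ℝ (Fin n) → ℝ) (A₁ A₂ : ℝ) (hA₁ : 0 ≤ A₁) (hA₂ : 0 ≤ A₂)
    (hf : ∀ x, f x ≥ -A₁ * ‖x‖ ^ 2 - A₂)
    (lam : ℝ) (hlam : A₁ < lam) (x : EuclideanSpace ℝ (Fin n)) :
    lowerT lam f x = moreauUpper lam (moreauLower lam f) x :=
  lowerT_eq_mixed_moreau_general n f A₁ A₂ hA₁ hf lam hlam x
end

section
/- Let n ≥ 1 and let f : ℝⁿ → ℝ satisfy f(x) ≥ −A₁|x|² − A₂ for all x ∈ ℝⁿ, for some constants A₁, A₂ ≥ 0. Then (i) for all A₁ < λ < τ < ∞ and all x ∈ ℝⁿ, C^l_λ(f)(x) ≤ C^l_τ(f)(x) ≤ f(x); and (ii) if in addition f is lower semicontinuous, then for every x ∈ ℝⁿ, C^l_λ(f)(x) → f(x) as λ → ∞. -/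
/-!
Since `(τ - λ)‖y‖² ≥ (τ - λ)(‖y‖² - ‖y - x‖²)`, an affine function of `y` with value
`(τ - λ)‖x‖²` at `x`, adding it to an affine minorant of `f + λ‖·‖²` gives one of `f + τ‖·‖²`;
this is the monotonicity in `λ`. Likewise `y ↦ λ(‖y‖² - ‖y - x‖²) + c` is affine, so
`C^l_λ(f)(x) ≥ c` as soon as `f ≥ c - λ‖· - x‖²`. For `c < f x` this holds near `x` by lower
semicontinuity, and away from `x` by the quadratic lower bound once `λ` is large.
-/

open Filter Topology

theorem exists_affineMap_eq_mul_sq_norm_sub {E : Type*} [NormedAddCommGroup E]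
    [InnerProductSpace ℝ E] (x : E) (μ c : ℝ) :
    ∃ ℓ : E →ᵃ[ℝ] ℝ, ∀ y, ℓ y = μ * (‖y‖ ^ 2 - ‖y - x‖ ^ 2) + c := by
  refine ⟨((2 * μ) • (innerSL ℝ x).toLinearMap).toAffineMap +
    AffineMap.const ℝ E (c - μ * ‖x‖ ^ 2), fun y => ?_⟩
  simp only [AffineMap.coe_add, Pi.add_apply, LinearMap.coe_toAffineMap, LinearMap.smul_apply,
    ContinuousLinearMap.coe_coe, innerSL_apply_apply, AffineMap.const_apply, smul_eq_mul]
  rw [norm_sub_sq_real, real_inner_comm]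
  ring

theorem sq_norm_le_two_mul_sq_norm_sub_add {E : Type*} [SeminormedAddCommGroup E] (x y : E) :
    ‖y‖ ^ 2 ≤ 2 * ‖y - x‖ ^ 2 + 2 * ‖x‖ ^ 2 :=
  calc ‖y‖ ^ 2 ≤ (‖y - x‖ + ‖x‖) ^ 2 := by
        gcongr
        simpa using norm_add_le (y - x) x
    _ ≤ 2 * ‖y - x‖ ^ 2 + 2 * ‖x‖ ^ 2 := by linarith [add_sq_le (a := ‖y - x‖) (b := ‖x‖)]

theorem eventually_forall_sub_mul_sq_norm_sub_le {E : Type*} [SeminormedAddCommGroup E]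
    {f : E → ℝ} {x : E} {μ c₀ c : ℝ} (hf : ∀ y, c₀ - μ * ‖y - x‖ ^ 2 ≤ f y)
    (hx : LowerSemicontinuousAt f x) (hc : c < f x) :
    ∀ᶠ lam in atTop, ∀ y, c - lam * ‖y - x‖ ^ 2 ≤ f y := by
  obtain ⟨δ, hδ, hball⟩ := Metric.eventually_nhds_iff.1 (hx c hc)
  filter_upwards [eventually_ge_atTop 0, eventually_ge_atTop (μ + max 0 (c - c₀) / δ ^ 2)]
    with lam hlam₀ hlam y
  by_cases hy : dist y x < δ
  · nlinarith [hball hy, sq_nonneg ‖y - x‖]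
  · have hδy : δ ^ 2 ≤ ‖y - x‖ ^ 2 := by
      rw [← dist_eq_norm]
      gcongr
      exact not_lt.1 hy
    have hμ : max 0 (c - c₀) / δ ^ 2 ≤ lam - μ := by linarith
    have hgap : c - c₀ ≤ (lam - μ) * ‖y - x‖ ^ 2 :=
      calc c - c₀ ≤ max 0 (c - c₀) / δ ^ 2 * δ ^ 2 := by
            rw [div_mul_cancel₀ _ (by positivity)]
            exact le_max_right _ _
        _ ≤ (lam - μ) * ‖y - x‖ ^ 2 :=
            mul_le_mul hμ hδy (sq_nonneg δ)
              ((div_nonneg (le_max_left _ _) (sq_nonneg δ)).trans hμ)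
    linarith [hf y]

section CompensatedConvexTransform

variable {n : ℕ} {g k f : EuclideanSpace ℝ (Fin n) → ℝ} {lam tau : ℝ}

theorem le_convEnv (ℓ : EuclideanSpace ℝ (Fin n) →ᵃ[ℝ] ℝ) (hℓ : ∀ y, ℓ y ≤ g y)
    (x : EuclideanSpace ℝ (Fin n)) : ℓ x ≤ convEnv g x :=
  le_csSup ⟨g x, by rintro _ ⟨ℓ', hℓ', rfl⟩; exact hℓ' x⟩ ⟨ℓ, hℓ, rfl⟩

/-- Without an affine minorant the defining supremum is `sSup ∅ = 0`. -/
theorem convEnv_le {b : ℝ} {x : EuclideanSpace ℝ (Fin n)}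
    (hg : ∃ ℓ : EuclideanSpace ℝ (Fin n) →ᵃ[ℝ] ℝ, ∀ y, ℓ y ≤ g y)
    (h : ∀ ℓ : EuclideanSpace ℝ (Fin n) →ᵃ[ℝ] ℝ, (∀ y, ℓ y ≤ g y) → ℓ x ≤ b) :
    convEnv g x ≤ b := by
  obtain ⟨ℓ, hℓ⟩ := hg
  refine csSup_le ⟨ℓ x, ℓ, hℓ, rfl⟩ ?_
  rintro _ ⟨ℓ', hℓ', rfl⟩
  exact h ℓ' hℓ'

theorem convEnv_le_self (hg : ∃ ℓ : EuclideanSpace ℝ (Fin n) →ᵃ[ℝ] ℝ, ∀ y, ℓ y ≤ g y)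
    (x : EuclideanSpace ℝ (Fin n)) : convEnv g x ≤ g x :=
  convEnv_le hg fun _ hℓ => hℓ x

theorem convEnv_add_affineMap_le (hg : ∃ ℓ : EuclideanSpace ℝ (Fin n) →ᵃ[ℝ] ℝ, ∀ y, ℓ y ≤ g y)
    (ℓ₀ : EuclideanSpace ℝ (Fin n) →ᵃ[ℝ] ℝ) (hk : ∀ y, g y + ℓ₀ y ≤ k y)
    (x : EuclideanSpace ℝ (Fin n)) : convEnv g x + ℓ₀ x ≤ convEnv k x := by
  rw [← le_sub_iff_add_le]
  refine convEnv_le hg fun ℓ hℓ => le_sub_iff_add_le.2 ?_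
  exact le_convEnv (ℓ + ℓ₀) (fun y => (add_le_add_left (hℓ y) _).trans (hk y)) x

theorem exists_affineMap_le_add_mul_sq_norm {A₁ A₂ : ℝ} (hf : ∀ y, -A₁ * ‖y‖ ^ 2 - A₂ ≤ f y)
    (hlam : A₁ ≤ lam) :
    ∃ ℓ : EuclideanSpace ℝ (Fin n) →ᵃ[ℝ] ℝ, ∀ y, ℓ y ≤ f y + lam * ‖y‖ ^ 2 :=
  ⟨AffineMap.const ℝ _ (-A₂), fun y => by
    rw [AffineMap.const_apply]
    nlinarith [hf y, mul_le_mul_of_nonneg_right hlam (sq_nonneg ‖y‖)]⟩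

theorem lowerT_le_self
    (hf : ∃ ℓ : EuclideanSpace ℝ (Fin n) →ᵃ[ℝ] ℝ, ∀ y, ℓ y ≤ f y + lam * ‖y‖ ^ 2)
    (x : EuclideanSpace ℝ (Fin n)) : lowerT lam f x ≤ f x := by
  have := convEnv_le_self hf x
  simp only [lowerT] at this ⊢
  linarith

theorem lowerT_mono
    (hf : ∃ ℓ : EuclideanSpace ℝ (Fin n) →ᵃ[ℝ] ℝ, ∀ y, ℓ y ≤ f y + lam * ‖y‖ ^ 2)
    (hlt : lam ≤ tau) (x : EuclideanSpace ℝ (Fin n)) : lowerT lam f x ≤ lowerT tau f x := by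
  obtain ⟨ℓ₀, hℓ₀⟩ := exists_affineMap_eq_mul_sq_norm_sub x (tau - lam) 0
  have hk : ∀ y, f y + lam * ‖y‖ ^ 2 + ℓ₀ y ≤ f y + tau * ‖y‖ ^ 2 := fun y => by
    nlinarith [hℓ₀ y, mul_nonneg (sub_nonneg.2 hlt) (sq_nonneg ‖y - x‖)]
  have := convEnv_add_affineMap_le hf ℓ₀ hk x
  simp only [hℓ₀, sub_self, norm_zero] at this
  simp only [lowerT]
  linarith

theorem le_lowerT_of_forall_sub_mul_sq_norm_sub_le {x : EuclideanSpace ℝ (Fin n)} {c : ℝ}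
    (h : ∀ y, c - lam * ‖y - x‖ ^ 2 ≤ f y) : c ≤ lowerT lam f x := by
  obtain ⟨ℓ, hℓ⟩ := exists_affineMap_eq_mul_sq_norm_sub x lam c
  have := le_convEnv (g := fun y => f y + lam * ‖y‖ ^ 2) ℓ (fun y => by linarith [hℓ y, h y]) x
  simp only [hℓ, sub_self, norm_zero] at this
  simp only [lowerT]
  linarith

theorem tendsto_lowerT {A₁ A₂ : ℝ} (hA₁ : 0 ≤ A₁) (hf : ∀ y, -A₁ * ‖y‖ ^ 2 - A₂ ≤ f y)
    {x : EuclideanSpace ℝ (Fin n)} (hx : LowerSemicontinuousAt f x) :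
    Tendsto (fun lam => lowerT lam f x) atTop (𝓝 (f x)) := by
  have hf_at_x : ∀ y, (-2 * A₁ * ‖x‖ ^ 2 - A₂) - 2 * A₁ * ‖y - x‖ ^ 2 ≤ f y := fun y => by
    nlinarith [hf y, mul_le_mul_of_nonneg_left (sq_norm_le_two_mul_sq_norm_sub_add x y) hA₁]
  refine tendsto_order.2 ⟨fun a ha => ?_, fun b hb => ?_⟩
  · obtain ⟨c, hac, hc⟩ := exists_between ha
    filter_upwards [eventually_forall_sub_mul_sq_norm_sub_le hf_at_x hx hc] with lam h
    exact hac.trans_le (le_lowerT_of_forall_sub_mul_sq_norm_sub_le h)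
  · filter_upwards [eventually_ge_atTop A₁] with lam hlam
    exact (lowerT_le_self (exists_affineMap_le_add_mul_sq_norm hf hlam) x).trans_lt hb

end CompensatedConvexTransform

theorem lowerT_monotone_and_tendsto_general (n : ℕ)
    (f : EuclideanSpace ℝ (Fin n) → ℝ) (A₁ A₂ : ℝ) (hA₁ : 0 ≤ A₁)
    (hf : ∀ x, f x ≥ -A₁ * ‖x‖ ^ 2 - A₂) :
    (∀ lam tau : ℝ, A₁ < lam → lam < tau →
      ∀ x, lowerT lam f x ≤ lowerT tau f x ∧ lowerT tau f x ≤ f x) ∧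
    (LowerSemicontinuous f → ∀ x,
      Filter.Tendsto (fun lam : ℝ => lowerT lam f x) Filter.atTop (nhds (f x))) :=
  ⟨fun _ _ hlam htau x =>
    ⟨lowerT_mono (exists_affineMap_le_add_mul_sq_norm hf hlam.le) htau.le x,
      lowerT_le_self (exists_affineMap_le_add_mul_sq_norm hf (hlam.trans htau).le) x⟩,
    fun hlsc x => tendsto_lowerT hA₁ hf (hlsc x)⟩

/-- Monotonicity in λ and approximation from below of the lower compensated
convex transform. -/
theorem lowerT_monotone_and_tendsto (n : ℕ) (hn : 1 ≤ n)
    (f : EuclideanSpace ℝ (Fin n) → ℝ) (A₁ A₂ : ℝ) (hA₁ : 0 ≤ A₁) (hA₂ : 0 ≤ A₂)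
    (hf : ∀ x, f x ≥ -A₁ * ‖x‖ ^ 2 - A₂) :
    (∀ lam tau : ℝ, A₁ < lam → lam < tau →
      ∀ x, lowerT lam f x ≤ lowerT tau f x ∧ lowerT tau f x ≤ f x) ∧
    (LowerSemicontinuous f → ∀ x,
      Filter.Tendsto (fun lam : ℝ => lowerT lam f x) Filter.atTop (nhds (f x))) :=
  lowerT_monotone_and_tendsto_general n f A₁ A₂ hA₁ hf
end

section
/- Let n ≥ 1 and let f : ℝⁿ → ℝ be differentiable with gradient Df Lipschitz on ℝⁿ with Lipschitz constant L, i.e. |Df(x) − Df(y)| ≤ L|x − y| for all x, y ∈ ℝⁿ. Then for every λ ≥ L and every x ∈ ℝⁿ, C^l_λ(f)(x) = f(x). -/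
open RealInnerProductSpace

/-!
With `Df` `L`-Lipschitz, the mean value inequality bounds the error of the first-order Taylor
expansion: `|f y - f x - ⟪Df x, y - x⟫| ≤ L ‖y - x‖²`. Since
`‖y‖² = ‖x‖² + 2 ⟪x, y - x⟫ + ‖y - x‖²`, for `λ ≥ L` the tangent plane of `f + λ ‖·‖²` at `x`
lies below `f + λ ‖·‖²` and touches it at `x`, so the convex envelope equals `f + λ ‖·‖²` there.
-/

section LipschitzGradient

variable {E : Type*} [NormedAddCommGroup E] [InnerProductSpace ℝ E] [CompleteSpace E]
  {f : E → ℝ} {f' : E → E} {L : ℝ}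

theorem abs_sub_sub_inner_le_of_lipschitz_gradient (hf : ∀ x, HasGradientAt f (f' x) x)
    (hf' : ∀ x y, ‖f' x - f' y‖ ≤ L * ‖x - y‖) (x y : E) :
    |f y - f x - ⟪f' x, y - x⟫| ≤ L * ‖y - x‖ ^ 2 := by
  have hLxy : 0 ≤ L * ‖y - x‖ := (norm_nonneg _).trans (hf' y x)
  have bound : ∀ z ∈ segment ℝ x y,
      ‖InnerProductSpace.toDual ℝ E (f' z) - InnerProductSpace.toDual ℝ E (f' x)‖ ≤
        L * ‖y - x‖ := by
    rw [segment_eq_image']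
    rintro _ ⟨t, ⟨ht0, ht1⟩, rfl⟩
    rw [← map_sub, LinearIsometryEquiv.norm_map]
    calc ‖f' (x + t • (y - x)) - f' x‖ ≤ L * ‖x + t • (y - x) - x‖ := hf' _ _
      _ = t * (L * ‖y - x‖) := by
        rw [add_sub_cancel_left, norm_smul, Real.norm_of_nonneg ht0]; ring
      _ ≤ L * ‖y - x‖ := mul_le_of_le_one_left hLxy ht1
  have mean_value := (convex_segment x y).norm_image_sub_le_of_norm_hasFDerivWithin_le'
    (fun z _ ↦ (hf z).hasFDerivAt.hasFDerivWithinAt) bound (left_mem_segment ℝ x y)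
    (right_mem_segment ℝ x y)
  simpa [Real.norm_eq_abs, sq, mul_assoc] using mean_value

theorem inner_add_le_add_mul_norm_sq_of_lipschitz_gradient (hf : ∀ x, HasGradientAt f (f' x) x)
    (hf' : ∀ x y, ‖f' x - f' y‖ ≤ L * ‖x - y‖) {lam : ℝ} (hlam : L ≤ lam) (x y : E) :
    f x + lam * ‖x‖ ^ 2 + ⟪f' x + (2 * lam) • x, y - x⟫ ≤ f y + lam * ‖y‖ ^ 2 := by
  have taylor := (abs_le.1 (abs_sub_sub_inner_le_of_lipschitz_gradient hf hf' x y)).1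
  have expand : ‖y‖ ^ 2 = ‖x‖ ^ 2 + 2 * ⟪x, y - x⟫ + ‖y - x‖ ^ 2 := by
    simpa using norm_add_sq_real x (y - x)
  have hL : L * ‖y - x‖ ^ 2 ≤ lam * ‖y - x‖ ^ 2 := mul_le_mul_of_nonneg_right hlam (sq_nonneg _)
  rw [inner_add_left, real_inner_smul_left, expand]
  linarith

end LipschitzGradient

theorem convEnv_eq_of_inner_add_le {n : ℕ} {g : EuclideanSpace ℝ (Fin n) → ℝ}
    {x w : EuclideanSpace ℝ (Fin n)} (h : ∀ y, g x + ⟪w, y - x⟫ ≤ g y) :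
    convEnv g x = g x := by
  let ℓ : EuclideanSpace ℝ (Fin n) →ᵃ[ℝ] ℝ :=
    { toFun := fun y ↦ g x + ⟪w, y - x⟫
      linear := innerₛₗ ℝ w
      map_vadd' := fun p v ↦ by
        simp only [vadd_eq_add, innerₛₗ_apply_apply, add_sub_assoc, inner_add_right]; ring }
  refine IsGreatest.csSup_eq ⟨⟨ℓ, h, by simp [ℓ]⟩, ?_⟩
  rintro _ ⟨ℓ', hℓ', rfl⟩
  exact hℓ' x

theorem lowerT_eq_self_of_lipschitz_gradient_general (n : ℕ)
    (f : EuclideanSpace ℝ (Fin n) → ℝ) (f' : EuclideanSpace ℝ (Fin n) → EuclideanSpace ℝ (Fin n))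
    (L : ℝ) (hdiff : ∀ x, HasGradientAt f (f' x) x)
    (hLip : ∀ x y, ‖f' x - f' y‖ ≤ L * ‖x - y‖)
    (lam : ℝ) (hlam : L ≤ lam) (x : EuclideanSpace ℝ (Fin n)) :
    lowerT lam f x = f x := by
  rw [lowerT, convEnv_eq_of_inner_add_le
    (inner_add_le_add_mul_norm_sq_of_lipschitz_gradient hdiff hLip hlam x)]
  ring

/-- If `f` has an `L`-Lipschitz gradient then `C^l_λ(f) = f` for all `λ ≥ L`. -/
theorem lowerT_eq_self_of_lipschitz_gradient (n : ℕ) (hn : 1 ≤ n)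
    (f : EuclideanSpace ℝ (Fin n) → ℝ) (f' : EuclideanSpace ℝ (Fin n) → EuclideanSpace ℝ (Fin n))
    (L : ℝ) (hdiff : ∀ x, HasGradientAt f (f' x) x)
    (hLip : ∀ x y, ‖f' x - f' y‖ ≤ L * ‖x - y‖)
    (lam : ℝ) (hlam : L ≤ lam) (x : EuclideanSpace ℝ (Fin n)) :
    lowerT lam f x = f x :=
  lowerT_eq_self_of_lipschitz_gradient_general n f f' L hdiff hLip lam hlam x
end

section
/- Let n ≥ 1 and let f : ℝⁿ → ℝ satisfy |f(x)| ≤ C₁|x|² + C₂ for all x ∈ ℝⁿ, with constants C₁, C₂ ≥ 0. Then for every λ > C₁ and every affine function ℓ : ℝⁿ → ℝ, the ridge and valley transforms are translation invariant: R_λ(f + ℓ)(x) = R_λ(f)(x) and V_λ(f + ℓ)(x) = V_λ(f)(x) for all x ∈ ℝⁿ; consequently the edge transform satisfies E_λ(f + ℓ) = E_λ(f). -/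
/-- Upper compensated convex transform. -/
noncomputable def upperT {n : ℕ} (lam : ℝ) (f : EuclideanSpace ℝ (Fin n) → ℝ)
    (x : EuclideanSpace ℝ (Fin n)) : ℝ :=
  lam * ‖x‖ ^ 2 - convEnv (fun y => lam * ‖y‖ ^ 2 - f y) x

/-- Ridge transform `R_λ(f) = f − C^l_λ(f)`. -/
noncomputable def ridgeT {n : ℕ} (lam : ℝ) (f : EuclideanSpace ℝ (Fin n) → ℝ)
    (x : EuclideanSpace ℝ (Fin n)) : ℝ :=
  f x - lowerT lam f x

/-- Valley transform `V_λ(f) = f − C^u_λ(f)`. -/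
noncomputable def valleyT {n : ℕ} (lam : ℝ) (f : EuclideanSpace ℝ (Fin n) → ℝ)
    (x : EuclideanSpace ℝ (Fin n)) : ℝ :=
  f x - upperT lam f x

/-- Edge transform `E_λ(f) = C^u_λ(f) − C^l_λ(f)`. -/
noncomputable def edgeT {n : ℕ} (lam : ℝ) (f : EuclideanSpace ℝ (Fin n) → ℝ)
    (x : EuclideanSpace ℝ (Fin n)) : ℝ :=
  upperT lam f x - lowerT lam f x

/-!
Adding an affine function `ℓ` to `g` shifts its affine minorants by `ℓ`, so
`co[g + ℓ] = co[g] + ℓ` as soon as `g` has one affine minorant (otherwise both envelopes are the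
junk value `sSup ∅ = 0`). Since `λ|·|² ± f` is bounded below by `-C₂` when `λ ≥ C₁`, both
compensated transforms of `f + ℓ` are those of `f` plus `ℓ`, and `ℓ` cancels in the ridge, valley
and edge transforms.
-/

section

variable {n : ℕ}

theorem convEnv_add_affineMap (g : EuclideanSpace ℝ (Fin n) → ℝ)
    (hg : ∃ ℓ₀ : EuclideanSpace ℝ (Fin n) →ᵃ[ℝ] ℝ, ∀ y, ℓ₀ y ≤ g y)
    (ℓ : EuclideanSpace ℝ (Fin n) →ᵃ[ℝ] ℝ) (x : EuclideanSpace ℝ (Fin n)) :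
    convEnv (fun y => g y + ℓ y) x = convEnv g x + ℓ x := by
  set S := {a : ℝ | ∃ ℓ' : EuclideanSpace ℝ (Fin n) →ᵃ[ℝ] ℝ, (∀ y, ℓ' y ≤ g y) ∧ a = ℓ' x}
  obtain ⟨ℓ₀, hℓ₀⟩ := hg
  have hne : S.Nonempty := ⟨ℓ₀ x, ℓ₀, hℓ₀, rfl⟩
  have hbdd : BddAbove S := ⟨g x, by rintro a ⟨ℓ', h', rfl⟩; exact h' x⟩
  have hshift : {a : ℝ | ∃ ℓ' : EuclideanSpace ℝ (Fin n) →ᵃ[ℝ] ℝ,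
      (∀ y, ℓ' y ≤ g y + ℓ y) ∧ a = ℓ' x} = (· + ℓ x) '' S := by
    ext a
    constructor
    · rintro ⟨ℓ', h', rfl⟩
      exact ⟨(ℓ' - ℓ) x, ⟨ℓ' - ℓ, fun y => by simpa using h' y, rfl⟩, by simp⟩
    · rintro ⟨_, ⟨ℓ', h', rfl⟩, rfl⟩
      exact ⟨ℓ' + ℓ, fun y => by simpa using h' y, by simp⟩
  rw [convEnv, convEnv, hshift]
  exact ((OrderIso.addRight (ℓ x)).map_csSup' hne hbdd).symm

theorem lowerT_add_affineMap (lam : ℝ) (f : EuclideanSpace ℝ (Fin n) → ℝ)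
    (hf : ∃ ℓ₀ : EuclideanSpace ℝ (Fin n) →ᵃ[ℝ] ℝ, ∀ y, ℓ₀ y ≤ f y + lam * ‖y‖ ^ 2)
    (ℓ : EuclideanSpace ℝ (Fin n) →ᵃ[ℝ] ℝ) (x : EuclideanSpace ℝ (Fin n)) :
    lowerT lam (fun y => f y + ℓ y) x = lowerT lam f x + ℓ x := by
  have hfun : (fun y : EuclideanSpace ℝ (Fin n) => f y + ℓ y + lam * ‖y‖ ^ 2)
      = fun y => f y + lam * ‖y‖ ^ 2 + ℓ y := funext fun y => by ring
  rw [lowerT, lowerT, hfun, convEnv_add_affineMap _ hf]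
  ring

theorem upperT_add_affineMap (lam : ℝ) (f : EuclideanSpace ℝ (Fin n) → ℝ)
    (hf : ∃ ℓ₀ : EuclideanSpace ℝ (Fin n) →ᵃ[ℝ] ℝ, ∀ y, ℓ₀ y ≤ lam * ‖y‖ ^ 2 - f y)
    (ℓ : EuclideanSpace ℝ (Fin n) →ᵃ[ℝ] ℝ) (x : EuclideanSpace ℝ (Fin n)) :
    upperT lam (fun y => f y + ℓ y) x = upperT lam f x + ℓ x := by
  have hfun : (fun y : EuclideanSpace ℝ (Fin n) => lam * ‖y‖ ^ 2 - (f y + ℓ y))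
      = fun y => lam * ‖y‖ ^ 2 - f y + (-ℓ) y := funext fun y => by
    rw [AffineMap.coe_neg, Pi.neg_apply]; ring
  rw [upperT, upperT, hfun, convEnv_add_affineMap _ hf, AffineMap.coe_neg, Pi.neg_apply]
  ring

theorem exists_affineMap_le_quadratic_add_and_sub {f : EuclideanSpace ℝ (Fin n) → ℝ}
    {C₁ C₂ lam : ℝ} (hf : ∀ x, |f x| ≤ C₁ * ‖x‖ ^ 2 + C₂) (hlam : C₁ ≤ lam) :
    (∃ ℓ₀ : EuclideanSpace ℝ (Fin n) →ᵃ[ℝ] ℝ, ∀ y, ℓ₀ y ≤ f y + lam * ‖y‖ ^ 2) ∧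
      ∃ ℓ₀ : EuclideanSpace ℝ (Fin n) →ᵃ[ℝ] ℝ, ∀ y, ℓ₀ y ≤ lam * ‖y‖ ^ 2 - f y := by
  have hbound (y : EuclideanSpace ℝ (Fin n)) : |f y| ≤ lam * ‖y‖ ^ 2 + C₂ :=
    (hf y).trans (by gcongr)
  refine ⟨⟨AffineMap.const ℝ _ (-C₂), fun y => ?_⟩, ⟨AffineMap.const ℝ _ (-C₂), fun y => ?_⟩⟩ <;>
    · rw [AffineMap.const_apply]
      linarith [abs_le.mp (hbound y)]

end

theorem ridge_valley_edge_affine_invariant_general (n : ℕ)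
    (f : EuclideanSpace ℝ (Fin n) → ℝ) (C₁ C₂ : ℝ)
    (hf : ∀ x, |f x| ≤ C₁ * ‖x‖ ^ 2 + C₂)
    (lam : ℝ) (hlam : C₁ < lam) (ℓ : EuclideanSpace ℝ (Fin n) →ᵃ[ℝ] ℝ)
    (x : EuclideanSpace ℝ (Fin n)) :
    ridgeT lam (fun y => f y + ℓ y) x = ridgeT lam f x ∧
    valleyT lam (fun y => f y + ℓ y) x = valleyT lam f x ∧
    edgeT lam (fun y => f y + ℓ y) x = edgeT lam f x := by
  obtain ⟨hlower, hupper⟩ := exists_affineMap_le_quadratic_add_and_sub hf hlam.le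
  have hl := lowerT_add_affineMap lam f hlower ℓ x
  have hu := upperT_add_affineMap lam f hupper ℓ x
  refine ⟨?_, ?_, ?_⟩
  · rw [ridgeT, ridgeT, hl]; ring
  · rw [valleyT, valleyT, hu]; ring
  · rw [edgeT, edgeT, hl, hu]; ring

/-- Translation (affine) invariance of the ridge, valley and edge transforms. -/
theorem ridge_valley_edge_affine_invariant (n : ℕ) (hn : 1 ≤ n)
    (f : EuclideanSpace ℝ (Fin n) → ℝ) (C₁ C₂ : ℝ) (hC₁ : 0 ≤ C₁) (hC₂ : 0 ≤ C₂)
    (hf : ∀ x, |f x| ≤ C₁ * ‖x‖ ^ 2 + C₂)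
    (lam : ℝ) (hlam : C₁ < lam) (ℓ : EuclideanSpace ℝ (Fin n) →ᵃ[ℝ] ℝ)
    (x : EuclideanSpace ℝ (Fin n)) :
    ridgeT lam (fun y => f y + ℓ y) x = ridgeT lam f x ∧
    valleyT lam (fun y => f y + ℓ y) x = valleyT lam f x ∧
    edgeT lam (fun y => f y + ℓ y) x = edgeT lam f x :=
  ridge_valley_edge_affine_invariant_general n f C₁ C₂ hf lam hlam ℓ x
end

section
/- Let n ≥ 1 and let f : ℝⁿ → ℝ satisfy |f(x)| ≤ C₁|x|² + C₂ for all x ∈ ℝⁿ, with constants C₁, C₂ ≥ 0. Then for every α > 0 and every λ with λ/α > C₁, the ridge and valley transforms are scale covariant: R_λ(αf)(x) = α · R_{λ/α}(f)(x) and V_λ(αf)(x) = α · V_{λ/α}(f)(x) for all x ∈ ℝⁿ; consequently E_λ(αf) = α · E_{λ/α}(f). -/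
/-!
Affine minorants of `α • g` are exactly `α •` the affine minorants of `g` when `α > 0`, so
`co[α g] = α co[g]`. Since `α f ± λ|·|² = α (f ± (λ/α)|·|²)`, both compensated convex transforms,
and hence the ridge, valley and edge transforms, scale by `α`.
-/

lemma convEnv_const_mul {n : ℕ} {α : ℝ} (hα : 0 < α) (g : EuclideanSpace ℝ (Fin n) → ℝ)
    (x : EuclideanSpace ℝ (Fin n)) :
    convEnv (fun y => α * g y) x = α * convEnv g x := by
  unfold convEnv
  -- this also covers sets unbounded above, whose `sSup` is the junk value `0` on both sides
  rw [← smul_eq_mul, ← Real.sSup_smul_of_nonneg hα.le]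
  congr 1
  ext a
  simp only [Set.mem_smul_set, Set.mem_ofPred_eq, smul_eq_mul]
  constructor
  · rintro ⟨ℓ, hℓ, rfl⟩
    refine ⟨α⁻¹ * ℓ x, ⟨α⁻¹ • ℓ, fun y => ?_, rfl⟩, by field_simp⟩
    rw [AffineMap.coe_smul, Pi.smul_apply, smul_eq_mul, inv_mul_le_iff₀ hα]
    exact hℓ y
  · rintro ⟨b, ⟨ℓ, hℓ, rfl⟩, rfl⟩
    exact ⟨α • ℓ, fun y => mul_le_mul_of_nonneg_left (hℓ y) hα.le, rfl⟩

lemma lowerT_const_mul {n : ℕ} {α : ℝ} (hα : 0 < α) (lam : ℝ)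
    (f : EuclideanSpace ℝ (Fin n) → ℝ) (x : EuclideanSpace ℝ (Fin n)) :
    lowerT lam (fun y => α * f y) x = α * lowerT (lam / α) f x := by
  have hsum : (fun y : EuclideanSpace ℝ (Fin n) => α * f y + lam * ‖y‖ ^ 2)
      = fun y => α * (f y + lam / α * ‖y‖ ^ 2) := by
    funext y; field_simp
  rw [lowerT, lowerT, hsum, convEnv_const_mul hα]
  field_simp

lemma upperT_const_mul {n : ℕ} {α : ℝ} (hα : 0 < α) (lam : ℝ)
    (f : EuclideanSpace ℝ (Fin n) → ℝ) (x : EuclideanSpace ℝ (Fin n)) :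
    upperT lam (fun y => α * f y) x = α * upperT (lam / α) f x := by
  have hdiff : (fun y : EuclideanSpace ℝ (Fin n) => lam * ‖y‖ ^ 2 - α * f y)
      = fun y => α * (lam / α * ‖y‖ ^ 2 - f y) := by
    funext y; field_simp
  rw [upperT, upperT, hdiff, convEnv_const_mul hα]
  field_simp

theorem ridge_valley_edge_scale_covariant_general (n : ℕ)
    (f : EuclideanSpace ℝ (Fin n) → ℝ)
    (α : ℝ) (hα : 0 < α) (lam : ℝ)
    (x : EuclideanSpace ℝ (Fin n)) :
    ridgeT lam (fun y => α * f y) x = α * ridgeT (lam / α) f x ∧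
    valleyT lam (fun y => α * f y) x = α * valleyT (lam / α) f x ∧
    edgeT lam (fun y => α * f y) x = α * edgeT (lam / α) f x := by
  simp only [ridgeT, valleyT, edgeT, lowerT_const_mul hα, upperT_const_mul hα]
  refine ⟨?_, ?_, ?_⟩ <;> ring

/-- Scale covariance of the ridge, valley and edge transforms. -/
theorem ridge_valley_edge_scale_covariant (n : ℕ) (hn : 1 ≤ n)
    (f : EuclideanSpace ℝ (Fin n) → ℝ) (C₁ C₂ : ℝ) (hC₁ : 0 ≤ C₁) (hC₂ : 0 ≤ C₂)
    (hf : ∀ x, |f x| ≤ C₁ * ‖x‖ ^ 2 + C₂)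
    (α : ℝ) (hα : 0 < α) (lam : ℝ) (hlam : C₁ < lam / α)
    (x : EuclideanSpace ℝ (Fin n)) :
    ridgeT lam (fun y => α * f y) x = α * ridgeT (lam / α) f x ∧
    valleyT lam (fun y => α * f y) x = α * valleyT (lam / α) f x ∧
    edgeT lam (fun y => α * f y) x = α * edgeT (lam / α) f x :=
  ridge_valley_edge_scale_covariant_general n f α hα lam x
end

section
/- Let n ≥ 1, let f : ℝⁿ → ℝ satisfy |f(x)| ≤ C₁|x|² + C₂ for all x ∈ ℝⁿ with constants C₁, C₂ ≥ 0, and let g : ℝⁿ → ℝ be differentiable with |Dg(x) − Dg(y)| ≤ ε|x − y| for all x, y ∈ ℝⁿ. Then for every λ with λ − ε > C₁ and every x ∈ ℝⁿ: R_{λ+ε}(f)(x) ≤ R_λ(f + g)(x) ≤ R_{λ−ε}(f)(x); V_{λ−ε}(f)(x) ≤ V_λ(f + g)(x) ≤ V_{λ+ε}(f)(x); and E_{λ+ε}(f)(x) ≤ E_λ(f + g)(x) ≤ E_{λ−ε}(f)(x). -/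
open scoped RealInnerProductSpace


/-!
Because `Dg` is `ε`-Lipschitz, `g(y) - g(x) - ⟪Dg(x), y - x⟫` is at most `ε ‖y - x‖²` in absolute
value, so both `g + ε ‖·‖²` and `-g + ε ‖·‖²` are supported by an affine function at every point.
Adding a function supported at `x` to the argument of the convex envelope raises the envelope at
`x` by at least that function's value there, which gives
`C^l_{λ-ε}(f) + g ≤ C^l_λ(f + g) ≤ C^l_{λ+ε}(f) + g`; the upper transform is reduced to the lower
one via `C^u_λ(f) = -C^l_λ(-f)`, and the three families of inequalities follow by subtraction.
The quadratic growth bound on `f` (with `λ - ε > C₁`) only ensures that every envelope involved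
is a supremum over a nonempty set, where `sSup` is not its junk value `0`.
-/

open scoped RealInnerProductSpace

section AffineMinorant

variable {E : Type*} [NormedAddCommGroup E] [InnerProductSpace ℝ E]

def HasAffineMinorant (F : E → ℝ) : Prop :=
  ∃ ℓ : E →ᵃ[ℝ] ℝ, ∀ y, ℓ y ≤ F y

def HasAffineSupportAt (F : E → ℝ) (x : E) : Prop :=
  ∃ ℓ : E →ᵃ[ℝ] ℝ, (∀ y, ℓ y ≤ F y) ∧ ℓ x = F x

theorem HasAffineMinorant.mono {F G : E → ℝ} (hF : HasAffineMinorant F) (hFG : ∀ y, F y ≤ G y) :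
    HasAffineMinorant G :=
  let ⟨ℓ, hℓ⟩ := hF; ⟨ℓ, fun y => (hℓ y).trans (hFG y)⟩

theorem HasAffineMinorant.add {F G : E → ℝ} (hF : HasAffineMinorant F)
    (hG : HasAffineMinorant G) : HasAffineMinorant (fun y => F y + G y) :=
  let ⟨ℓ, hℓ⟩ := hF; let ⟨m, hm⟩ := hG; ⟨ℓ + m, fun y => add_le_add (hℓ y) (hm y)⟩

theorem HasAffineSupportAt.hasAffineMinorant {F : E → ℝ} {x : E} (hF : HasAffineSupportAt F x) :
    HasAffineMinorant F :=
  let ⟨ℓ, hℓ, _⟩ := hF; ⟨ℓ, hℓ⟩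

theorem hasAffineMinorant_add_sq_of_abs_le {F : E → ℝ} {C₁ C₂ μ : ℝ}
    (hF : ∀ y, |F y| ≤ C₁ * ‖y‖ ^ 2 + C₂) (hμ : C₁ ≤ μ) :
    HasAffineMinorant (fun y => F y + μ * ‖y‖ ^ 2) :=
  ⟨AffineMap.const ℝ E (-C₂), fun y => by
    have := mul_le_mul_of_nonneg_right hμ (sq_nonneg ‖y‖)
    simp only [AffineMap.const_apply]
    linarith [neg_abs_le (F y), hF y]⟩

/-- The support is `y ↦ g x + ε ‖x‖² + ⟪v + 2 ε x, y - x⟫`, because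
`‖y‖² - ‖y - x‖² = ‖x‖² + 2 ⟪x, y - x⟫`. -/
theorem hasAffineSupportAt_add_sq {g : E → ℝ} {x v : E} {ε : ℝ}
    (hx : ∀ y, g x + ⟪v, y - x⟫ - ε * ‖y - x‖ ^ 2 ≤ g y) :
    HasAffineSupportAt (fun y => g y + ε * ‖y‖ ^ 2) x := by
  set w := v + (2 * ε) • x
  refine ⟨(innerSL ℝ w).toLinearMap.toAffineMap +
    AffineMap.const ℝ E (g x + ε * ‖x‖ ^ 2 - ⟪w, x⟫), fun y => ?_, ?_⟩
  · have hsq : ‖y‖ ^ 2 = ‖x‖ ^ 2 + 2 * ⟪x, y - x⟫ + ‖y - x‖ ^ 2 := by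
      rw [← norm_add_sq_real, add_sub_cancel]
    have := hx y
    simp only [AffineMap.coe_add, Pi.add_apply, LinearMap.coe_toAffineMap,
      ContinuousLinearMap.coe_coe, innerSL_apply_apply, AffineMap.const_apply, w, hsq,
      inner_add_left, real_inner_smul_left, inner_sub_right, real_inner_self_eq_norm_sq] at this ⊢
    linarith
  · simp

end AffineMinorant

section Taylor

variable {E : Type*} [NormedAddCommGroup E] [InnerProductSpace ℝ E] [CompleteSpace E]

theorem abs_sub_sub_inner_le_of_lipschitz_gradient_s13 {g : E → ℝ} {g' : E → E} {ε : ℝ}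
    (hg : ∀ x, HasGradientAt g (g' x) x) (hLip : ∀ x y, ‖g' x - g' y‖ ≤ ε * ‖x - y‖) (x y : E) :
    |g y - g x - ⟪g' x, y - x⟫| ≤ ε * ‖y - x‖ ^ 2 := by
  rcases eq_or_ne y x with rfl | hyx
  · simp
  have hε : 0 ≤ ε := nonneg_of_mul_nonneg_left ((norm_nonneg _).trans (hLip y x))
    (norm_pos_iff.2 (sub_ne_zero.2 hyx))
  have bound : ∀ z ∈ Metric.closedBall x ‖y - x‖,
      ‖InnerProductSpace.toDual ℝ E (g' z) - InnerProductSpace.toDual ℝ E (g' x)‖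
        ≤ ε * ‖y - x‖ := fun z hz => by
    rw [← map_sub, LinearIsometryEquiv.norm_map]
    exact (hLip z x).trans (mul_le_mul_of_nonneg_left (mem_closedBall_iff_norm.1 hz) hε)
  have := (convex_closedBall x ‖y - x‖).norm_image_sub_le_of_norm_hasFDerivWithin_le'
    (fun z _ => (hg z).hasFDerivAt.hasFDerivWithinAt) bound
    (Metric.mem_closedBall_self (norm_nonneg _)) (mem_closedBall_iff_norm.2 le_rfl)
  rw [InnerProductSpace.toDual_apply_apply, Real.norm_eq_abs] at this
  linarith

theorem hasAffineSupportAt_add_sq_of_lipschitz_gradient {g : E → ℝ} {g' : E → E} {ε : ℝ}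
    (hg : ∀ x, HasGradientAt g (g' x) x) (hLip : ∀ x y, ‖g' x - g' y‖ ≤ ε * ‖x - y‖) (x : E) :
    HasAffineSupportAt (fun y => g y + ε * ‖y‖ ^ 2) x ∧
      HasAffineSupportAt (fun y => -g y + ε * ‖y‖ ^ 2) x := by
  have taylor y := abs_le.1 (abs_sub_sub_inner_le_of_lipschitz_gradient_s13 hg hLip x y)
  refine ⟨hasAffineSupportAt_add_sq (v := g' x) fun y => ?_,
    hasAffineSupportAt_add_sq (v := -g' x) fun y => ?_⟩
  · linarith [(taylor y).1]
  · rw [inner_neg_left]; linarith [(taylor y).2]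

end Taylor

section Transforms

variable {n : ℕ}

theorem convEnv_add_le {F G H : EuclideanSpace ℝ (Fin n) → ℝ} {x : EuclideanSpace ℝ (Fin n)}
    (hF : HasAffineMinorant F) (hG : HasAffineSupportAt G x) (hH : ∀ y, F y + G y ≤ H y) :
    convEnv F x + G x ≤ convEnv H x := by
  obtain ⟨ℓ₀, hℓ₀⟩ := hF
  obtain ⟨m, hm, hmx⟩ := hG
  have hbdd : BddAbove {a : ℝ | ∃ ℓ : EuclideanSpace ℝ (Fin n) →ᵃ[ℝ] ℝ,
      (∀ y, ℓ y ≤ H y) ∧ a = ℓ x} := ⟨H x, by rintro a ⟨ℓ, hℓ, rfl⟩; exact hℓ x⟩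
  rw [← le_sub_iff_add_le]
  refine csSup_le ⟨_, ℓ₀, hℓ₀, rfl⟩ ?_
  rintro a ⟨ℓ, hℓ, rfl⟩
  rw [le_sub_iff_add_le, ← hmx]
  exact le_csSup hbdd ⟨ℓ + m, fun y => (add_le_add (hℓ y) (hm y)).trans (hH y), rfl⟩

theorem lowerT_add_le {F ψ H : EuclideanSpace ℝ (Fin n) → ℝ} {x : EuclideanSpace ℝ (Fin n)}
    {lam μ : ℝ} (hF : HasAffineMinorant (fun y => F y + lam * ‖y‖ ^ 2))
    (hψ : HasAffineSupportAt (fun y => ψ y + μ * ‖y‖ ^ 2) x) (hH : ∀ y, F y + ψ y ≤ H y) :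
    lowerT lam F x + ψ x ≤ lowerT (lam + μ) H x := by
  have := convEnv_add_le hF hψ (H := fun y => H y + (lam + μ) * ‖y‖ ^ 2)
    fun y => by linarith [hH y]
  simp only [lowerT]
  linarith

theorem upperT_eq_neg_lowerT_neg (lam : ℝ) (f : EuclideanSpace ℝ (Fin n) → ℝ)
    (x : EuclideanSpace ℝ (Fin n)) : upperT lam f x = -lowerT lam (fun y => -f y) x := by
  simp only [upperT, lowerT, neg_add_eq_sub]
  ring

end Transforms

theorem ridge_valley_edge_curvature_stability_general (n : ℕ)
    (f : EuclideanSpace ℝ (Fin n) → ℝ) (C₁ C₂ : ℝ)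
    (hf : ∀ x, |f x| ≤ C₁ * ‖x‖ ^ 2 + C₂)
    (g : EuclideanSpace ℝ (Fin n) → ℝ)
    (g' : EuclideanSpace ℝ (Fin n) → EuclideanSpace ℝ (Fin n))
    (hg : ∀ x, HasGradientAt g (g' x) x)
    (ε : ℝ) (hLip : ∀ x y, ‖g' x - g' y‖ ≤ ε * ‖x - y‖)
    (lam : ℝ) (hlam : C₁ < lam - ε) (x : EuclideanSpace ℝ (Fin n)) :
    (ridgeT (lam + ε) f x ≤ ridgeT lam (fun y => f y + g y) x ∧
      ridgeT lam (fun y => f y + g y) x ≤ ridgeT (lam - ε) f x) ∧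
    (valleyT (lam - ε) f x ≤ valleyT lam (fun y => f y + g y) x ∧
      valleyT lam (fun y => f y + g y) x ≤ valleyT (lam + ε) f x) ∧
    (edgeT (lam + ε) f x ≤ edgeT lam (fun y => f y + g y) x ∧
      edgeT lam (fun y => f y + g y) x ≤ edgeT (lam - ε) f x) := by
  obtain ⟨supp_g, supp_neg_g⟩ := hasAffineSupportAt_add_sq_of_lipschitz_gradient hg hLip x
  have minor_f := hasAffineMinorant_add_sq_of_abs_le hf hlam.le
  have minor_neg_f :=
    hasAffineMinorant_add_sq_of_abs_le (F := fun y => -f y) (by simpa using hf) hlam.le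
  have minor_fg : HasAffineMinorant (fun y => (f y + g y) + lam * ‖y‖ ^ 2) :=
    (minor_f.add supp_g.hasAffineMinorant).mono fun y => le_of_eq (by ring)
  have minor_neg_fg : HasAffineMinorant (fun y => -(f y + g y) + lam * ‖y‖ ^ 2) :=
    (minor_neg_f.add supp_neg_g.hasAffineMinorant).mono fun y => le_of_eq (by ring)
  have lowerT_fg_ge := lowerT_add_le minor_f supp_g (H := fun y => f y + g y) fun y => le_rfl
  have lowerT_fg_le := lowerT_add_le minor_fg supp_neg_g (H := f) fun y => le_of_eq (by ring)
  have lowerT_neg_fg_ge := lowerT_add_le minor_neg_f supp_neg_g (H := fun y => -(f y + g y))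
    fun y => le_of_eq (by ring)
  have lowerT_neg_fg_le := lowerT_add_le minor_neg_fg supp_g (H := fun y => -f y)
    fun y => le_of_eq (by ring)
  simp only [sub_add_cancel] at lowerT_fg_ge lowerT_neg_fg_ge
  simp only [ridgeT, valleyT, edgeT, upperT_eq_neg_lowerT_neg]
  refine ⟨⟨?_, ?_⟩, ⟨?_, ?_⟩, ?_, ?_⟩ <;> linarith

/-- Stability of the ridge, valley and edge transforms under curvature
perturbations: if `Dg` is `ε`-Lipschitz and `λ − ε > C₁`, then
`R_{λ+ε}(f) ≤ R_λ(f+g) ≤ R_{λ−ε}(f)` and similarly for `V` and `E`. -/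
theorem ridge_valley_edge_curvature_stability (n : ℕ) (hn : 1 ≤ n)
    (f : EuclideanSpace ℝ (Fin n) → ℝ) (C₁ C₂ : ℝ) (hC₁ : 0 ≤ C₁) (hC₂ : 0 ≤ C₂)
    (hf : ∀ x, |f x| ≤ C₁ * ‖x‖ ^ 2 + C₂)
    (g : EuclideanSpace ℝ (Fin n) → ℝ)
    (g' : EuclideanSpace ℝ (Fin n) → EuclideanSpace ℝ (Fin n))
    (hg : ∀ x, HasGradientAt g (g' x) x)
    (ε : ℝ) (hLip : ∀ x y, ‖g' x - g' y‖ ≤ ε * ‖x - y‖)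
    (lam : ℝ) (hlam : C₁ < lam - ε) (x : EuclideanSpace ℝ (Fin n)) :
    (ridgeT (lam + ε) f x ≤ ridgeT lam (fun y => f y + g y) x ∧
      ridgeT lam (fun y => f y + g y) x ≤ ridgeT (lam - ε) f x) ∧
    (valleyT (lam - ε) f x ≤ valleyT lam (fun y => f y + g y) x ∧
      valleyT lam (fun y => f y + g y) x ≤ valleyT (lam + ε) f x) ∧
    (edgeT (lam + ε) f x ≤ edgeT lam (fun y => f y + g y) x ∧
      edgeT lam (fun y => f y + g y) x ≤ edgeT (lam - ε) f x) :=
  ridge_valley_edge_curvature_stability_general n f C₁ C₂ hf g g' hg ε hLip lam hlam x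
end

section
/- Let n ≥ 1, let Ω ⊂ ℝⁿ be a non-empty bounded open set with diameter d_Ω, and set K = ℝⁿ \ Ω. Let f : ℝⁿ → ℝ be bounded and uniformly continuous with |f(x)| ≤ A₀ for some A₀ > 0 and all x ∈ ℝⁿ, and suppose ω : [0, ∞) → [0, ∞) is concave and nondecreasing with |f(x) − f(y)| ≤ ω(|x − y|) for all x, y ∈ ℝⁿ and ω(t) ≤ a·t + b for all t ≥ 0, for some constants a ≥ 0, b ≥ 0. Then for every λ > 0, every M > A₀ + λ·d_Ω², and every x ∈ ℝⁿ, |A^M_λ(f_K)(x) − f(x)| ≤ ω( r_c(x) + a/λ + √(2b/λ) ), where r_c(x) is the convex density radius of x with respect to K. -/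
/-- Extension of `f|_K` by the constant `M` outside of `K`. -/
noncomputable def extWith {n : ℕ} (K : Set (EuclideanSpace ℝ (Fin n)))
    (f : EuclideanSpace ℝ (Fin n) → ℝ) (M : ℝ) (x : EuclideanSpace ℝ (Fin n)) : ℝ :=
  open Classical in if x ∈ K then f x else M

/-- Average compensated convex approximation of `f|_K`, of scale `λ` and level `M`:
`A^M_λ(f_K) = ½ (C^l_λ(f_K^M) + C^u_λ(f_K^{−M}))`. -/
noncomputable def avgApprox {n : ℕ} (lam M : ℝ) (K : Set (EuclideanSpace ℝ (Fin n)))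
    (f : EuclideanSpace ℝ (Fin n) → ℝ) (x : EuclideanSpace ℝ (Fin n)) : ℝ :=
  (lowerT lam (extWith K f M) x + upperT lam (extWith K f (-M)) x) / 2

/-- Convex density radius: smallest `r ≥ 0` such that `x` lies in the convex hull
of `K ∩ B̄(x; r)`. -/
noncomputable def convDensRad {n : ℕ} (K : Set (EuclideanSpace ℝ (Fin n)))
    (x : EuclideanSpace ℝ (Fin n)) : ℝ :=
  sInf {r : ℝ | 0 ≤ r ∧ x ∈ convexHull ℝ (K ∩ Metric.closedBall x r)}

/-!
With `g⁺ = f_K^M + λ‖·‖²` and `g⁻ = λ‖·‖² - f_K^{-M}` one has `A^M_λ(f_K) = (co g⁺ - co g⁻) / 2`.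
Every point is a convex combination of points of `K` at distance at most `d_Ω`, and
`M > A₀ + λ d_Ω²`; hence the convex hull of the epigraph of `g⁻` over `K` contains everything
above `λ‖y‖² + λ d_Ω² + A₀`, and a Hahn–Banach separation in `ℝⁿ × ℝ` shows that `co g⁻ (x)` is
approached by `∑ wᵢ g⁻(zᵢ)` over convex combinations `x = ∑ wᵢ zᵢ` with `zᵢ ∈ K`.
Using the same combination to bound `co g⁺ (x)`, Jensen's inequality for the concave `ω` gives
`A(x) - f(x) ≤ ε/2 + ω(m)` with `m = ∑ wᵢ ‖zᵢ - x‖`. Comparing with a combination of points of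
`K ∩ B̄(x; r)` gives `λ m² ≤ λ r² + ω(r) + ω(m) + ε`, and `ω(t) ≤ a t + b` turns this into
`m ≤ r + a/λ + √(2b/λ) + √(ε/λ)`. Let `ε → 0` and `r ↓ r_c(x)`, and apply the result to `-f`.
-/

open scoped RealInnerProductSpace
open Metric Set

section ConvexHullEpigraph

variable {E : Type*}

def epigraphOn (s : Set E) (g : E → ℝ) : Set (E × ℝ) := {p | p.1 ∈ s ∧ g p.1 ≤ p.2}

theorem epigraphOn_mono {s t : Set E} {g : E → ℝ} (h : s ⊆ t) :
    epigraphOn s g ⊆ epigraphOn t g :=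
  fun _ hp => And.intro (h hp.1) hp.2

theorem AffineMap.le_of_mem_convexHull_epigraphOn [AddCommGroup E] [Module ℝ E] {s : Set E}
    {g : E → ℝ} {ℓ : E →ᵃ[ℝ] ℝ} (hℓ : ∀ y ∈ s, ℓ y ≤ g y) {p : E × ℝ}
    (hp : p ∈ convexHull ℝ (epigraphOn s g)) : ℓ p.1 ≤ p.2 := by
  have hconv : Convex ℝ {q : E × ℝ | ℓ q.1 ≤ q.2} := by
    intro q hq q' hq' a b ha hb hab
    simp only [mem_ofPred_eq, Prod.fst_add, Prod.snd_add, Prod.smul_fst, Prod.smul_snd,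
      Convex.combo_affine_apply hab, smul_eq_mul] at hq hq' ⊢
    nlinarith
  exact convexHull_min (fun q hq => (hℓ q.1 hq.1).trans hq.2) hconv hp

theorem exists_sum_le_of_mem_convexHull_epigraphOn [AddCommGroup E] [Module ℝ E] {s : Set E}
    {g : E → ℝ} {x : E} {c : ℝ} (h : (x, c) ∈ convexHull ℝ (epigraphOn s g)) :
    ∃ (ι : Type) (t : Finset ι) (w : ι → ℝ) (z : ι → E), (∀ i ∈ t, 0 ≤ w i) ∧
      ∑ i ∈ t, w i = 1 ∧ (∀ i ∈ t, z i ∈ s) ∧ ∑ i ∈ t, w i • z i = x ∧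
      ∑ i ∈ t, w i * g (z i) ≤ c := by
  rw [convexHull_eq] at h
  obtain ⟨ι, t, w, p, hw0, hw1, hp, hx⟩ := h
  rw [Finset.centerMass_eq_of_sum_1 _ _ hw1, Prod.ext_iff, Prod.fst_sum, Prod.snd_sum] at hx
  simp only [Prod.smul_fst, Prod.smul_snd, smul_eq_mul] at hx
  refine ⟨ι, t, w, fun i => (p i).1, hw0, hw1, fun i hi => (hp i hi).1, hx.1, ?_⟩
  rw [← hx.2]
  exact Finset.sum_le_sum fun i hi => mul_le_mul_of_nonneg_left (hp i hi).2 (hw0 i hi)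

theorem mk_sum_mem_convexHull_epigraphOn [AddCommGroup E] [Module ℝ E] {s : Set E}
    {g : E → ℝ} {ι : Type*} {t : Finset ι} {w : ι → ℝ} {z : ι → E} (hw0 : ∀ i ∈ t, 0 ≤ w i)
    (hw1 : ∑ i ∈ t, w i = 1) (hz : ∀ i ∈ t, z i ∈ s) :
    (∑ i ∈ t, w i • z i, ∑ i ∈ t, w i * g (z i)) ∈ convexHull ℝ (epigraphOn s g) := by
  have hmem : ∀ i ∈ t, (z i, g (z i)) ∈ convexHull ℝ (epigraphOn s g) := fun i hi =>
    subset_convexHull ℝ _ (And.intro (hz i hi) le_rfl)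
  have := (convex_convexHull ℝ (epigraphOn s g)).sum_mem hw0 hw1 hmem
  convert this using 1
  ext <;> simp [Prod.fst_sum, Prod.snd_sum]

theorem mk_mem_convexHull_epigraphOn [NormedAddCommGroup E] [InnerProductSpace ℝ E]
    {s : Set E} {g : E → ℝ} {y : E} {r lam B : ℝ} (hlam : 0 ≤ lam)
    (hys : y ∈ convexHull ℝ s) (hsr : s ⊆ closedBall y r)
    (hg : ∀ z ∈ s, g z ≤ lam * ‖z‖ ^ 2 + B) :
    (y, lam * ‖y‖ ^ 2 + lam * r ^ 2 + B) ∈ convexHull ℝ (epigraphOn s g) := by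
  -- the affine map `z ↦ (z, λ‖z‖² - λ‖z - y‖² + λr² + B)` lifts `s` into the epigraph
  let φ : E →ᵃ[ℝ] E × ℝ := (LinearMap.id.prod ((2 * lam) • innerₛₗ ℝ y)).toAffineMap +
    AffineMap.const ℝ E ((0 : E), -lam * ‖y‖ ^ 2 + lam * r ^ 2 + B)
  have hφ : ∀ z, φ z = (z, lam * (2 * ⟪y, z⟫ - ‖y‖ ^ 2) + lam * r ^ 2 + B) := by
    intro z
    simp only [AffineMap.coe_add, LinearMap.coe_toAffineMap, AffineMap.coe_const, Pi.add_apply,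
      LinearMap.prod_apply, LinearMap.id_coe, LinearMap.coe_smul, coe_innerₛₗ_apply,
      Function.prod_apply, id_eq, Pi.smul_apply, smul_eq_mul, Function.const_apply,
      Prod.mk_add_mk, add_zero, Prod.mk.injEq, true_and, φ]
    ring
  have hφs : φ '' s ⊆ epigraphOn s g := by
    rintro _ ⟨z, hz, rfl⟩
    refine ⟨by simpa [hφ] using hz, ?_⟩
    have hzr : ‖z - y‖ ^ 2 ≤ r ^ 2 := by
      have := mem_closedBall_iff_norm.mp (hsr hz)
      exact pow_le_pow_left₀ (norm_nonneg _) this 2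
    rw [hφ]
    have := norm_sub_sq_real z y
    rw [real_inner_comm] at this
    nlinarith [hg z hz]
  have := convexHull_mono hφs ((φ.image_convexHull s) ▸ mem_image_of_mem φ hys)
  rwa [hφ, real_inner_self_eq_norm_sq, show lam * (2 * ‖y‖ ^ 2 - ‖y‖ ^ 2) = lam * ‖y‖ ^ 2 by ring]
    at this

theorem exists_affineMap_le_of_notMem_convexHull [NormedAddCommGroup E] [NormedSpace ℝ E]
    {S : Set (E × ℝ)} {x : E} {c C : ℝ} (hC : (x, C) ∈ interior (convexHull ℝ S))
    (hcC : c < C) (hc : (x, c) ∉ convexHull ℝ S) :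
    ∃ ℓ : E →ᵃ[ℝ] ℝ, ℓ x = c ∧ ∀ p ∈ S, ℓ p.1 ≤ p.2 := by
  have hG : Convex ℝ (convexHull ℝ S) := convex_convexHull ℝ S
  obtain ⟨φ, hφ⟩ := geometric_hahn_banach_open_point hG.interior isOpen_interior
    (fun h => hc (interior_subset h))
  have hφG : ∀ p ∈ convexHull ℝ S, φ p ≤ φ (x, c) := by
    have : closure (interior (convexHull ℝ S)) ⊆ {p | φ p ≤ φ (x, c)} :=
      closure_minimal (fun p hp => (hφ p hp).le) (isClosed_le φ.continuous continuous_const)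
    rw [hG.closure_interior_eq_closure_of_nonempty_interior ⟨_, hC⟩] at this
    exact fun p hp => this (subset_closure hp)
  set ψ : E →L[ℝ] ℝ := φ.comp (ContinuousLinearMap.inl ℝ E ℝ)
  set β := φ (0, 1)
  have hsplit : ∀ y s, φ (y, s) = ψ y + s * β := by
    intro y s
    rw [show ((y, s) : E × ℝ) = (y, 0) + s • (0, 1) by simp, map_add, map_smul, smul_eq_mul]
    rfl
  have hβ : β < 0 := by
    have := hφ _ hC
    rw [hsplit, hsplit] at this
    nlinarith
  -- the graph of `ℓ` is the separating hyperplane `φ = φ (x, c)`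
  refine ⟨((-β⁻¹) • ψ.toLinearMap).toAffineMap + AffineMap.const ℝ E (c + β⁻¹ * ψ x), ?_, ?_⟩
  · simp
  · rintro ⟨y, s⟩ hp
    have := hφG _ (subset_convexHull ℝ S hp)
    rw [hsplit, hsplit] at this
    have hdiv : c - s ≤ (ψ y - ψ x) / β := by rw [le_div_iff_of_neg hβ]; linarith
    simp only [AffineMap.coe_add, LinearMap.coe_toAffineMap, AffineMap.coe_const, Pi.add_apply,
      LinearMap.smul_apply, ContinuousLinearMap.coe_coe, smul_eq_mul, Function.const_apply]
    rw [div_eq_inv_mul] at hdiv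
    linarith

theorem exists_add_smul_notMem_of_isBounded [NormedAddCommGroup E] [NormedSpace ℝ E]
    {Ω : Set E} (hΩo : IsOpen Ω) (hΩb : Bornology.IsBounded Ω) {y : E} (hy : y ∈ Ω) {e : E}
    (he : ‖e‖ = 1) : ∃ s, 0 ≤ s ∧ s ≤ diam Ω ∧ y + s • e ∉ Ω := by
  have hdist : ∀ s, 0 ≤ s → y + s • e ∈ Ω → s ≤ diam Ω := fun s hs h => by
    simpa [norm_smul, he, abs_of_nonneg hs] using dist_le_diam_of_mem hΩb h hy
  set T := {s : ℝ | 0 ≤ s ∧ y + s • e ∉ Ω}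
  have hT : T.Nonempty :=
    ⟨diam Ω + 1, by positivity, fun h => by linarith [hdist _ (by positivity) h]⟩
  have hTc : IsClosed T := isClosed_Ici.inter (hΩo.isClosed_compl.preimage (by fun_prop))
  have hTb : BddBelow T := ⟨0, fun s hs => hs.1⟩
  obtain ⟨hs0, hsΩ⟩ := hTc.csInf_mem hT hTb
  refine ⟨sInf T, hs0, le_of_forall_lt_imp_le_of_dense fun s hs => ?_, hsΩ⟩
  rcases lt_or_ge s 0 with h | h
  · exact h.le.trans diam_nonneg
  · exact hdist s h (not_not.mp fun h' => (csInf_le hTb ⟨h, h'⟩).not_gt hs)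

theorem mem_convexHull_compl_inter_closedBall_diam [NormedAddCommGroup E] [NormedSpace ℝ E]
    [Nontrivial E] {Ω : Set E} (hΩo : IsOpen Ω) (hΩb : Bornology.IsBounded Ω) (y : E) :
    y ∈ convexHull ℝ (Ωᶜ ∩ closedBall y (diam Ω)) := by
  by_cases hy : y ∈ Ω
  · have hmem : ∀ {s : ℝ} {v : E}, 0 ≤ s → s ≤ diam Ω → ‖v‖ = 1 → y + s • v ∉ Ω →
        y + s • v ∈ Ωᶜ ∩ closedBall y (diam Ω) := fun hs hsd hv hsΩ =>
      ⟨hsΩ, by simpa [norm_smul, hv, abs_of_nonneg hs] using hsd⟩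
    obtain ⟨e, he⟩ := exists_norm_eq E zero_le_one
    have he' : ‖-e‖ = 1 := by rwa [norm_neg]
    obtain ⟨s, hs0, hsd, hsΩ⟩ := exists_add_smul_notMem_of_isBounded hΩo hΩb hy he
    obtain ⟨t, ht0, htd, htΩ⟩ := exists_add_smul_notMem_of_isBounded hΩo hΩb hy he'
    refine segment_subset_convexHull (hmem ht0 htd he' htΩ) (hmem hs0 hsd he hsΩ)
      (mem_segment_iff_sameRay.2 ?_)
    simpa using ((SameRay.refl e).nonneg_smul_left ht0).nonneg_smul_right hs0
  · exact subset_convexHull ℝ _ ⟨hy, mem_closedBall_self diam_nonneg⟩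

theorem mk_mem_convexHull_epigraphOn_compl [NormedAddCommGroup E] [InnerProductSpace ℝ E]
    [Nontrivial E] {Ω : Set E} (hΩo : IsOpen Ω) (hΩb : Bornology.IsBounded Ω) {g : E → ℝ}
    {lam B : ℝ} (hlam : 0 ≤ lam) (hg : ∀ z ∈ Ωᶜ, g z ≤ lam * ‖z‖ ^ 2 + B) {y : E} {c : ℝ}
    (hc : lam * ‖y‖ ^ 2 + lam * diam Ω ^ 2 + B ≤ c) :
    (y, c) ∈ convexHull ℝ (epigraphOn Ωᶜ g) := by
  have := mk_mem_convexHull_epigraphOn hlam (B := c - (lam * ‖y‖ ^ 2 + lam * diam Ω ^ 2))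
    (mem_convexHull_compl_inter_closedBall_diam hΩo hΩb y) inter_subset_right
    (g := g) (fun z hz => by linarith [hg z hz.1])
  rw [add_sub_cancel] at this
  exact convexHull_mono (epigraphOn_mono inter_subset_left) this

end ConvexHullEpigraph

section ConvexEnvelope

variable {n : ℕ}

local notation "E" => EuclideanSpace ℝ (Fin n)

theorem convEnv_le_of_mem_convexHull_epigraphOn {g : E → ℝ} {s : Set E} {x : E} {c : ℝ}
    (hg : ∃ ℓ : E →ᵃ[ℝ] ℝ, ∀ y, ℓ y ≤ g y) (hx : (x, c) ∈ convexHull ℝ (epigraphOn s g)) :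
    convEnv g x ≤ c := by
  obtain ⟨ℓ₀, hℓ₀⟩ := hg
  refine csSup_le ⟨_, ℓ₀, hℓ₀, rfl⟩ ?_
  rintro _ ⟨ℓ, hℓ, rfl⟩
  exact ℓ.le_of_mem_convexHull_epigraphOn (fun y _ => hℓ y) hx

theorem mk_convEnv_add_mem_convexHull_epigraphOn {g B : E → ℝ} {s : Set E} (hB : Continuous B)
    (hup : ∀ y c, B y < c → (y, c) ∈ convexHull ℝ (epigraphOn s g))
    (hout : ∀ y ∉ s, B y ≤ g y) (x : E) {ε : ℝ} (hε : 0 < ε) :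
    (x, convEnv g x + ε) ∈ convexHull ℝ (epigraphOn s g) := by
  have hleB : ∀ ℓ : E →ᵃ[ℝ] ℝ, (∀ y ∈ s, ℓ y ≤ g y) → ∀ y, ℓ y ≤ B y := fun ℓ hℓ y =>
    le_of_forall_gt_imp_ge_of_dense fun c hc => ℓ.le_of_mem_convexHull_epigraphOn hℓ (hup y c hc)
  by_contra hx
  set C := max (B x + 1) (convEnv g x + ε + 1)
  have hC : (x, C) ∈ interior (convexHull ℝ (epigraphOn s g)) :=
    interior_maximal (fun p hp => hup p.1 p.2 hp)
      (isOpen_lt (hB.comp continuous_fst) continuous_snd)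
      (show B x < C by simp [C])
  obtain ⟨ℓ, hℓx, hℓ⟩ := exists_affineMap_le_of_notMem_convexHull hC (by simp [C]) hx
  have hℓs : ∀ y ∈ s, ℓ y ≤ g y := fun y hy => hℓ (y, g y) ⟨hy, le_rfl⟩
  have hℓg : ∀ y, ℓ y ≤ g y := fun y => by
    by_cases hy : y ∈ s
    · exact hℓs y hy
    · exact (hleB ℓ hℓs y).trans (hout y hy)
  have : ℓ x ≤ convEnv g x := by
    refine le_csSup ⟨B x, ?_⟩ ⟨ℓ, hℓg, rfl⟩
    rintro _ ⟨ℓ', hℓ', rfl⟩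
    exact hleB ℓ' (fun y _ => hℓ' y) x
  linarith

end ConvexEnvelope

section Estimates

variable {E ι : Type*}

theorem abs_sum_mul_sub_le_of_concaveOn [NormedAddCommGroup E] {f : E → ℝ} {ω : ℝ → ℝ}
    (hωcc : ConcaveOn ℝ (Ici 0) ω) (hmod : ∀ x y, |f x - f y| ≤ ω ‖x - y‖) {t : Finset ι}
    {w : ι → ℝ} (hw0 : ∀ i ∈ t, 0 ≤ w i) (hw1 : ∑ i ∈ t, w i = 1) (z : ι → E) (x : E) :
    |∑ i ∈ t, w i * f (z i) - f x| ≤ ω (∑ i ∈ t, w i * ‖z i - x‖) :=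
  calc |∑ i ∈ t, w i * f (z i) - f x| = |∑ i ∈ t, w i * (f (z i) - f x)| := by
        simp only [mul_sub, Finset.sum_sub_distrib, ← Finset.sum_mul, hw1, one_mul]
    _ ≤ ∑ i ∈ t, w i * |f (z i) - f x| := by
        refine (Finset.abs_sum_le_sum_abs _ _).trans_eq (Finset.sum_congr rfl fun i hi => ?_)
        rw [abs_mul, abs_of_nonneg (hw0 i hi)]
    _ ≤ ∑ i ∈ t, w i * ω ‖z i - x‖ :=
        Finset.sum_le_sum fun i hi => mul_le_mul_of_nonneg_left (hmod _ _) (hw0 i hi)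
    _ ≤ ω (∑ i ∈ t, w i * ‖z i - x‖) := by
        simpa using hωcc.le_map_sum hw0 hw1 fun i _ => norm_nonneg (z i - x)

theorem sum_mul_norm_sq_eq [NormedAddCommGroup E] [InnerProductSpace ℝ E] {t : Finset ι}
    {w : ι → ℝ} (hw1 : ∑ i ∈ t, w i = 1) {z : ι → E} {x : E} (hx : ∑ i ∈ t, w i • z i = x) :
    ∑ i ∈ t, w i * ‖z i‖ ^ 2 = ‖x‖ ^ 2 + ∑ i ∈ t, w i * ‖z i - x‖ ^ 2 := by
  have hinner : ∑ i ∈ t, w i * ⟪z i, x⟫ = ‖x‖ ^ 2 := by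
    simp_rw [← real_inner_smul_left, ← sum_inner, hx, real_inner_self_eq_norm_sq]
  simp_rw [norm_sub_sq_real, mul_add, mul_sub, Finset.sum_add_distrib, Finset.sum_sub_distrib,
    ← Finset.sum_mul, hw1, mul_left_comm _ (2 : ℝ), ← Finset.mul_sum, hinner]
  ring

theorem sq_sum_mul_le_sum_mul_sq {t : Finset ι} {w : ι → ℝ} (hw0 : ∀ i ∈ t, 0 ≤ w i)
    (hw1 : ∑ i ∈ t, w i = 1) {u : ι → ℝ} (hu : ∀ i ∈ t, 0 ≤ u i) :
    (∑ i ∈ t, w i * u i) ^ 2 ≤ ∑ i ∈ t, w i * u i ^ 2 := by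
  simpa using (convexOn_pow 2).map_sum_le hw0 hw1 hu

theorem Real.sqrt_add_le_add_sqrt {p q : ℝ} (hp : 0 ≤ p) (hq : 0 ≤ q) : √(p + q) ≤ √p + √q :=
  Real.sqrt_le_iff.mpr ⟨by positivity, by
    nlinarith [Real.sq_sqrt hp, Real.sq_sqrt hq, Real.sqrt_nonneg p, Real.sqrt_nonneg q]⟩

theorem le_div_add_sqrt_of_mul_sq_le {lam a c u : ℝ} (hlam : 0 < lam) (ha : 0 ≤ a)
    (h : lam * u ^ 2 ≤ a * u + c) : u ≤ a / lam + √(c / lam) := by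
  rcases le_or_gt u (a / lam) with hu | hu
  · linarith [Real.sqrt_nonneg (c / lam)]
  · have hv : (u - a / lam) ^ 2 ≤ c / lam := by
      rw [le_div_iff₀ hlam]
      have hexp : (u - a / lam) ^ 2 * lam = lam * u ^ 2 - 2 * a * u + a * (a / lam) := by
        field_simp
        ring
      nlinarith [mul_nonneg ha (sub_pos.2 hu).le]
    linarith [Real.abs_le_sqrt hv, le_abs_self (u - a / lam)]

theorem le_add_div_add_sqrt_of_mul_sq_le {lam a c m r : ℝ} (hlam : 0 < lam) (ha : 0 ≤ a)
    (hc : 0 ≤ c) (hr : 0 ≤ r) (h : lam * m ^ 2 ≤ lam * r ^ 2 + a * (m + r) + c) :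
    m ≤ r + (a / lam + √(c / lam)) := by
  rcases le_or_gt m r with hmr | hmr
  · linarith [Real.sqrt_nonneg (c / lam), div_nonneg ha hlam.le]
  · suffices lam * (m - r) ^ 2 ≤ a * (m - r) + c by
      linarith [le_div_add_sqrt_of_mul_sq_le hlam ha this]
    rcases le_or_gt (lam * (m - r)) a with hla | hla
    · nlinarith
    · nlinarith

end Estimates

section AverageApproximation

variable {n : ℕ}

local notation "E" => EuclideanSpace ℝ (Fin n)

theorem extWith_of_mem {K : Set E} (f : E → ℝ) (M : ℝ) {y : E} (hy : y ∈ K) :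
    extWith K f M y = f y :=
  if_pos hy

theorem extWith_of_notMem {K : Set E} (f : E → ℝ) (M : ℝ) {y : E} (hy : y ∉ K) :
    extWith K f M y = M :=
  if_neg hy

theorem abs_extWith_le {K : Set E} {f : E → ℝ} {M M' : ℝ} (hf : ∀ y, |f y| ≤ M)
    (hM' : |M'| ≤ M) (y : E) : |extWith K f M' y| ≤ M := by
  by_cases hy : y ∈ K
  · rw [extWith_of_mem f M' hy]
    exact hf y
  · rwa [extWith_of_notMem f M' hy]

theorem avgApprox_neg (lam M : ℝ) (K : Set E) (f : E → ℝ) (x : E) :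
    avgApprox lam M K (fun y => -f y) x = -avgApprox lam M K f x := by
  have hl : (fun y : E => extWith K (fun y' => -f y') M y + lam * ‖y‖ ^ 2) =
      fun y : E => lam * ‖y‖ ^ 2 - extWith K f (-M) y := by
    funext y
    unfold extWith
    split_ifs <;> ring
  have hu : (fun y : E => lam * ‖y‖ ^ 2 - extWith K (fun y' => -f y') (-M) y) =
      fun y : E => extWith K f M y + lam * ‖y‖ ^ 2 := by
    funext y
    unfold extWith
    split_ifs <;> ring
  simp only [avgApprox, lowerT, upperT, hl, hu]
  ring

theorem lowerT_extWith_le_sum {K : Set E} {f : E → ℝ} {lam M : ℝ} (hlam : 0 ≤ lam)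
    (hfM : ∀ y, |f y| ≤ M) {ι : Type*} {t : Finset ι} {w : ι → ℝ} {z : ι → E}
    (hw0 : ∀ i ∈ t, 0 ≤ w i) (hw1 : ∑ i ∈ t, w i = 1) (hz : ∀ i ∈ t, z i ∈ K) {x : E}
    (hx : ∑ i ∈ t, w i • z i = x) :
    lowerT lam (extWith K f M) x ≤
      ∑ i ∈ t, w i * f (z i) + lam * ∑ i ∈ t, w i * ‖z i - x‖ ^ 2 := by
  have hM : |M| ≤ M := (abs_of_nonneg ((abs_nonneg _).trans (hfM x))).le
  have hmin : ∃ ℓ : E →ᵃ[ℝ] ℝ, ∀ y, ℓ y ≤ extWith K f M y + lam * ‖y‖ ^ 2 :=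
    ⟨AffineMap.const ℝ E (-M), fun y => by
      have := (abs_le.1 (abs_extWith_le (K := K) hfM hM y)).1
      simp only [AffineMap.const_apply]
      nlinarith [sq_nonneg ‖y‖]⟩
  have hsum : ∑ i ∈ t, w i * (extWith K f M (z i) + lam * ‖z i‖ ^ 2) =
      ∑ i ∈ t, w i * f (z i) + lam * ∑ i ∈ t, w i * ‖z i‖ ^ 2 := by
    rw [Finset.mul_sum, ← Finset.sum_add_distrib]
    exact Finset.sum_congr rfl fun i hi => by rw [extWith_of_mem f M (hz i hi)]; ring
  have := convEnv_le_of_mem_convexHull_epigraphOn hmin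
    (hx ▸ mk_sum_mem_convexHull_epigraphOn hw0 hw1 hz)
  rw [hsum, sum_mul_norm_sq_eq hw1 hx] at this
  rw [lowerT]
  linarith

theorem sub_le_upperT_extWith {K : Set E} {f : E → ℝ} {ω : ℝ → ℝ}
    (hωm : MonotoneOn ω (Ici 0)) (hmod : ∀ x y, |f x - f y| ≤ ω ‖x - y‖) {lam M : ℝ}
    (hlam : 0 ≤ lam) (hfM : ∀ y, |f y| ≤ M) {x : E} {r : ℝ} (hr0 : 0 ≤ r)
    (hr : x ∈ convexHull ℝ (K ∩ closedBall x r)) :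
    f x - ω r - lam * r ^ 2 ≤ upperT lam (extWith K f (-M)) x := by
  have hM : |-M| ≤ M := by rw [abs_neg]; exact (abs_of_nonneg ((abs_nonneg _).trans (hfM x))).le
  have hmin : ∃ ℓ : E →ᵃ[ℝ] ℝ, ∀ y, ℓ y ≤ lam * ‖y‖ ^ 2 - extWith K f (-M) y :=
    ⟨AffineMap.const ℝ E (-M), fun y => by
      have := (abs_le.1 (abs_extWith_le (K := K) hfM hM y)).2
      simp only [AffineMap.const_apply]
      nlinarith [sq_nonneg ‖y‖]⟩
  have := convEnv_le_of_mem_convexHull_epigraphOn hmin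
    (mk_mem_convexHull_epigraphOn (B := ω r - f x) hlam hr inter_subset_right fun z hz => by
      have hzx : ‖x - z‖ ≤ r := by simpa [dist_eq_norm] using mem_closedBall'.1 hz.2
      rw [extWith_of_mem f (-M) hz.1]
      linarith [(abs_le.1 (hmod x z)).2, hωm (norm_nonneg _) hr0 hzx])
  rw [upperT]
  linarith

theorem exists_sum_upperT_extWith_le (hn : 1 ≤ n) {Ω : Set E} (hΩo : IsOpen Ω)
    (hΩb : Bornology.IsBounded Ω) {f : E → ℝ} {A₀ : ℝ} (hfb : ∀ x, |f x| ≤ A₀) {lam M : ℝ}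
    (hlam : 0 ≤ lam) (hM : A₀ + lam * diam Ω ^ 2 < M) (x : E) {ε : ℝ} (hε : 0 < ε) :
    ∃ (ι : Type) (t : Finset ι) (w : ι → ℝ) (z : ι → E), (∀ i ∈ t, 0 ≤ w i) ∧
      ∑ i ∈ t, w i = 1 ∧ (∀ i ∈ t, z i ∈ Ωᶜ) ∧ ∑ i ∈ t, w i • z i = x ∧
      upperT lam (extWith Ωᶜ f (-M)) x ≤
        ∑ i ∈ t, w i * f (z i) - lam * ∑ i ∈ t, w i * ‖z i - x‖ ^ 2 + ε := by
  have : Nonempty (Fin n) := ⟨⟨0, hn⟩⟩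
  set g : E → ℝ := fun y => lam * ‖y‖ ^ 2 - extWith Ωᶜ f (-M) y
  have hgK : ∀ y ∈ Ωᶜ, g y = lam * ‖y‖ ^ 2 - f y := fun y hy => by
    simp only [g, extWith_of_mem f (-M) hy]
  have hhull := mk_convEnv_add_mem_convexHull_epigraphOn (g := g)
    (B := fun y => lam * ‖y‖ ^ 2 + lam * diam Ω ^ 2 + A₀) (by fun_prop)
    (fun y c hc => mk_mem_convexHull_epigraphOn_compl hΩo hΩb hlam
      (fun z hz => by rw [hgK z hz]; linarith [(abs_le.1 (hfb z)).1]) hc.le)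
    (fun y hy => by simp only [g, extWith_of_notMem f (-M) hy]; linarith) x hε
  obtain ⟨ι, t, w, z, hw0, hw1, hzK, hzx, hsum⟩ := exists_sum_le_of_mem_convexHull_epigraphOn hhull
  refine ⟨ι, t, w, z, hw0, hw1, hzK, hzx, ?_⟩
  have hsum_g : ∑ i ∈ t, w i * g (z i) =
      lam * (‖x‖ ^ 2 + ∑ i ∈ t, w i * ‖z i - x‖ ^ 2) - ∑ i ∈ t, w i * f (z i) := by
    rw [← sum_mul_norm_sq_eq hw1 hzx, Finset.mul_sum, ← Finset.sum_sub_distrib]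
    exact Finset.sum_congr rfl fun i hi => by rw [hgK _ (hzK i hi)]; ring
  rw [upperT]
  linarith

theorem avgApprox_sub_le_of_mem_convexHull (hn : 1 ≤ n) {Ω : Set E} (hΩo : IsOpen Ω)
    (hΩb : Bornology.IsBounded Ω) {f : E → ℝ} {A₀ : ℝ} (hfb : ∀ x, |f x| ≤ A₀)
    {ω : ℝ → ℝ} (hωcc : ConcaveOn ℝ (Ici 0) ω) (hωm : MonotoneOn ω (Ici 0))
    (hmod : ∀ x y, |f x - f y| ≤ ω ‖x - y‖) {a b : ℝ} (ha : 0 ≤ a) (hb : 0 ≤ b)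
    (hab : ∀ t, 0 ≤ t → ω t ≤ a * t + b) {lam M : ℝ} (hlam : 0 < lam)
    (hM : A₀ + lam * diam Ω ^ 2 < M) {x : E} {r : ℝ} (hr0 : 0 ≤ r)
    (hr : x ∈ convexHull ℝ (Ωᶜ ∩ closedBall x r)) {ε : ℝ} (hε : 0 < ε) :
    avgApprox lam M Ωᶜ f x - f x ≤
      ε / 2 + ω (r + (a / lam + √(2 * b / lam)) + √(ε / lam)) := by
  have hfM : ∀ y, |f y| ≤ M := fun y =>
    (hfb y).trans (by nlinarith [abs_nonneg (f x), hfb x, sq_nonneg (diam Ω)])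
  obtain ⟨ι, t, w, z, hw0, hw1, hzK, hzx, hupper⟩ :=
    exists_sum_upperT_extWith_le hn hΩo hΩb hfb hlam.le hM x hε
  have hlower := lowerT_extWith_le_sum hlam.le hfM hw0 hw1 hzK hzx
  have hupper' := sub_le_upperT_extWith hωm hmod hlam.le hfM hr0 hr
  set m := ∑ i ∈ t, w i * ‖z i - x‖
  have hm0 : 0 ≤ m := Finset.sum_nonneg fun i hi => mul_nonneg (hw0 i hi) (norm_nonneg _)
  have hJ := abs_le.1 (abs_sum_mul_sub_le_of_concaveOn hωcc hmod hw0 hw1 z x)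
  have hm2 := sq_sum_mul_le_sum_mul_sq hw0 hw1 (u := fun i => ‖z i - x‖)
    fun i _ => norm_nonneg _
  have hm : m ≤ r + (a / lam + √(2 * b / lam)) + √(ε / lam) := by
    have := le_add_div_add_sqrt_of_mul_sq_le hlam ha (c := 2 * b + ε) (by positivity) hr0
      (m := m) (by nlinarith [hab m hm0, hab r hr0])
    rw [add_div] at this
    linarith [Real.sqrt_add_le_add_sqrt (by positivity : 0 ≤ 2 * b / lam)
      (by positivity : 0 ≤ ε / lam)]
  calc avgApprox lam M Ωᶜ f x - f x ≤ ε / 2 + ω m := by rw [avgApprox]; linarith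
    _ ≤ _ := by
      gcongr
      exact hωm hm0 (hm0.trans hm) hm

theorem convDensRad_nonneg (K : Set E) (x : E) : 0 ≤ convDensRad K x :=
  Real.sInf_nonneg fun _ hr => hr.1

theorem exists_lt_convDensRad_add_of_isBounded (hn : 1 ≤ n) {Ω : Set E} (hΩo : IsOpen Ω)
    (hΩb : Bornology.IsBounded Ω) (x : E) {δ : ℝ} (hδ : 0 < δ) :
    ∃ r, (0 ≤ r ∧ x ∈ convexHull ℝ (Ωᶜ ∩ closedBall x r)) ∧ r < convDensRad Ωᶜ x + δ :=
  have : Nonempty (Fin n) := ⟨⟨0, hn⟩⟩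
  exists_lt_of_csInf_lt
    ⟨diam Ω, diam_nonneg, mem_convexHull_compl_inter_closedBall_diam hΩo hΩb x⟩
    (lt_add_of_pos_right _ hδ)

theorem avgApprox_sub_le_add (hn : 1 ≤ n) {Ω : Set E} (hΩo : IsOpen Ω)
    (hΩb : Bornology.IsBounded Ω) {f : E → ℝ} {A₀ : ℝ} (hfb : ∀ x, |f x| ≤ A₀)
    {ω : ℝ → ℝ} (hωcc : ConcaveOn ℝ (Ici 0) ω) (hωm : MonotoneOn ω (Ici 0))
    (hmod : ∀ x y, |f x - f y| ≤ ω ‖x - y‖) {a b : ℝ} (ha : 0 ≤ a) (hb : 0 ≤ b)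
    (hab : ∀ t, 0 ≤ t → ω t ≤ a * t + b) {lam M : ℝ} (hlam : 0 < lam)
    (hM : A₀ + lam * diam Ω ^ 2 < M) (x : E) {η : ℝ} (hη : 0 < η) :
    avgApprox lam M Ωᶜ f x - f x ≤
      η + ω (convDensRad Ωᶜ x + (a / lam + √(2 * b / lam)) + η) := by
  obtain ⟨r, ⟨hr0, hr⟩, hrlt⟩ :=
    exists_lt_convDensRad_add_of_isBounded hn hΩo hΩb x (half_pos hη)
  set ε := min η (lam * (η / 2) ^ 2)
  have hε : 0 < ε := lt_min hη (by positivity)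
  have hεlam : √(ε / lam) ≤ η / 2 := Real.sqrt_le_iff.2 ⟨by positivity,
    (div_le_iff₀ hlam).2 (by linarith [min_le_right η (lam * (η / 2) ^ 2)])⟩
  calc avgApprox lam M Ωᶜ f x - f x
        ≤ ε / 2 + ω (r + (a / lam + √(2 * b / lam)) + √(ε / lam)) :=
        avgApprox_sub_le_of_mem_convexHull hn hΩo hΩb hfb hωcc hωm hmod ha hb hab hlam hM
          hr0 hr hε
    _ ≤ _ := by
        gcongr ?_ + ?_
        · linarith [min_le_left η (lam * (η / 2) ^ 2)]
        · have := convDensRad_nonneg Ωᶜ x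
          exact hωm (mem_Ici.2 (by positivity)) (mem_Ici.2 (by positivity)) (by linarith)

theorem avgApprox_sub_le (hn : 1 ≤ n) {Ω : Set E} (hΩo : IsOpen Ω)
    (hΩb : Bornology.IsBounded Ω) {f : E → ℝ} {A₀ : ℝ} (hfb : ∀ x, |f x| ≤ A₀)
    {ω : ℝ → ℝ} (hωcc : ConcaveOn ℝ (Ici 0) ω) (hωm : MonotoneOn ω (Ici 0))
    (hω0 : ∀ t, 0 ≤ t → 0 ≤ ω t) (hmod : ∀ x y, |f x - f y| ≤ ω ‖x - y‖) {a b : ℝ}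
    (ha : 0 ≤ a) (hb : 0 ≤ b) (hab : ∀ t, 0 ≤ t → ω t ≤ a * t + b) {lam M : ℝ}
    (hlam : 0 < lam) (hM : A₀ + lam * diam Ω ^ 2 < M) (x : E) :
    avgApprox lam M Ωᶜ f x - f x ≤ ω (convDensRad Ωᶜ x + a / lam + √(2 * b / lam)) := by
  rw [add_assoc]
  set τ := a / lam + √(2 * b / lam)
  have hrc0 := convDensRad_nonneg Ωᶜ x
  have hτ0 : 0 ≤ τ := by positivity
  have hcont : ContinuousWithinAt ω (Ioi (convDensRad Ωᶜ x + τ)) (convDensRad Ωᶜ x + τ) := by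
    rcases (add_nonneg hrc0 hτ0).eq_or_lt with h0 | hpos
    · -- `r_c(x) + τ = 0` forces `a = b = 0`, so that `ω` vanishes on `[0, ∞)`
      obtain ⟨ha0, hb0⟩ := (add_eq_zero_iff_of_nonneg (by positivity) (Real.sqrt_nonneg _)).1
        (by linarith : τ = 0)
      rw [Real.sqrt_eq_zero (by positivity)] at hb0
      simp only [div_eq_zero_iff, hlam.ne', or_false, mul_eq_zero, two_ne_zero, false_or] at ha0 hb0
      subst ha0 hb0
      have hω : EqOn ω 0 (Ici 0) := fun t ht => le_antisymm (by simpa using hab t ht) (hω0 t ht)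
      rw [← h0]
      exact continuousWithinAt_const.congr (fun t ht => hω (Ioi_subset_Ici_self ht))
        (hω self_mem_Ici)
    · exact ((hωcc.subset Ioi_subset_Ici_self (convex_Ioi 0)).continuousOn isOpen_Ioi
        |>.continuousAt (Ioi_mem_nhds hpos)).continuousWithinAt
  have hlim : ContinuousWithinAt (fun t => t - (convDensRad Ωᶜ x + τ) + ω t)
      (Ioi (convDensRad Ωᶜ x + τ)) (convDensRad Ωᶜ x + τ) :=
    (continuousWithinAt_id.sub continuousWithinAt_const).add hcont
  refine ge_of_tendsto (by simpa using hlim.tendsto)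
    (eventually_nhdsWithin_of_forall fun t ht => ?_)
  have h := avgApprox_sub_le_add hn hΩo hΩb hfb hωcc hωm hmod ha hb hab hlam hM x (sub_pos.2 ht)
  rwa [add_sub_cancel] at h

end AverageApproximation

theorem avgApprox_error_estimate_complement_general (n : ℕ) (hn : 1 ≤ n)
    (Ω : Set (EuclideanSpace ℝ (Fin n))) (hΩo : IsOpen Ω)
    (hΩb : Bornology.IsBounded Ω)
    (f : EuclideanSpace ℝ (Fin n) → ℝ) (A₀ : ℝ)
    (hfb : ∀ x, |f x| ≤ A₀)
    (ω : ℝ → ℝ) (hωcc : ConcaveOn ℝ (Set.Ici 0) ω) (hωm : MonotoneOn ω (Set.Ici 0))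
    (hω0 : ∀ t, 0 ≤ t → 0 ≤ ω t)
    (hmod : ∀ x y, |f x - f y| ≤ ω ‖x - y‖)
    (a b : ℝ) (ha : 0 ≤ a) (hb : 0 ≤ b) (hab : ∀ t, 0 ≤ t → ω t ≤ a * t + b)
    (lam M : ℝ) (hlam : 0 < lam) (hM : A₀ + lam * Metric.diam Ω ^ 2 < M)
    (x : EuclideanSpace ℝ (Fin n)) :
    |avgApprox lam M Ωᶜ f x - f x| ≤
      ω (convDensRad Ωᶜ x + a / lam + Real.sqrt (2 * b / lam)) := by
  have hneg := avgApprox_sub_le hn hΩo hΩb (f := fun y => -f y) (by simpa using hfb) hωcc hωm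
    hω0 (fun y z => by rw [neg_sub_neg, abs_sub_comm]; exact hmod y z) ha hb hab hlam hM x
  rw [avgApprox_neg] at hneg
  rw [abs_sub_le_iff]
  exact ⟨avgApprox_sub_le hn hΩo hΩb hfb hωcc hωm hω0 hmod ha hb hab hlam hM x, by linarith⟩

/-- Error estimate for the average approximation when `K` is the complement of a
bounded open set. -/
theorem avgApprox_error_estimate_complement (n : ℕ) (hn : 1 ≤ n)
    (Ω : Set (EuclideanSpace ℝ (Fin n))) (hΩne : Ω.Nonempty) (hΩo : IsOpen Ω)
    (hΩb : Bornology.IsBounded Ω)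
    (f : EuclideanSpace ℝ (Fin n) → ℝ) (A₀ : ℝ) (hA₀ : 0 < A₀)
    (hfb : ∀ x, |f x| ≤ A₀) (hfu : UniformContinuous f)
    (ω : ℝ → ℝ) (hωcc : ConcaveOn ℝ (Set.Ici 0) ω) (hωm : MonotoneOn ω (Set.Ici 0))
    (hω0 : ∀ t, 0 ≤ t → 0 ≤ ω t)
    (hmod : ∀ x y, |f x - f y| ≤ ω ‖x - y‖)
    (a b : ℝ) (ha : 0 ≤ a) (hb : 0 ≤ b) (hab : ∀ t, 0 ≤ t → ω t ≤ a * t + b)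
    (lam M : ℝ) (hlam : 0 < lam) (hM : A₀ + lam * Metric.diam Ω ^ 2 < M)
    (x : EuclideanSpace ℝ (Fin n)) :
    |avgApprox lam M Ωᶜ f x - f x| ≤
      ω (convDensRad Ωᶜ x + a / lam + Real.sqrt (2 * b / lam)) :=
  avgApprox_error_estimate_complement_general n hn Ω hΩo hΩb f A₀ hfb ω hωcc hωm hω0 hmod a b ha hb
    hab lam M hlam hM x
end
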